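/- arXiv:1504.04776 — 10 statements merged into one kernel-verified Lean document; each statement's English description precedes it below -/
import Mathlib

section
/- Let α and β be positive real constants with αβ = 1. Then there exist positive finite constants c ≤ C, depending only on α and β, such that for all A ∈ (0,1): c·log(1 + A^{-1/α}) ≤ ∫₀¹ (A + t^α)^{-β} dt ≤ C·log(1 + A^{-1/α}). -/
/-!
Put `s = A ^ β`. Since `(t ^ α) ^ β = t` and `max a b ≤ a + b ≤ 2 max a b`, the integrand
`(A + t ^ α) ^ (-β)` lies between `2 ^ (-β) / max s t` and `1 / max s t`, and
`∫₀¹ dt / max s t = 1 - log s`. For `0 < s ≤ 1` the quantity `1 - log s` is comparable to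
`log (1 + s⁻¹)`, and `s⁻¹ = A ^ (-(1/α))` because `1/α = β`.
-/

open MeasureTheory Set Real

lemma integral_inv_max_of_le_one {s : ℝ} (hs0 : 0 < s) (hs1 : s ≤ 1) :
    ∫ t in (0:ℝ)..1, (max s t)⁻¹ = 1 - log s := by
  have hcont : Continuous fun t : ℝ => (max s t)⁻¹ :=
    (continuous_const.max continuous_id).inv₀ fun t => (hs0.trans_le (le_max_left s t)).ne'
  rw [← intervalIntegral.integral_add_adjacent_intervals (hcont.intervalIntegrable 0 s)
    (hcont.intervalIntegrable s 1)]
  have hflat : ∫ t in (0:ℝ)..s, (max s t)⁻¹ = 1 := by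
    rw [intervalIntegral.integral_congr (g := fun _ => s⁻¹) fun t ht => by
      rw [uIcc_of_le hs0.le] at ht
      simp [max_eq_left ht.2]]
    simp [hs0.ne']
  have hlog : ∫ t in s..(1:ℝ), (max s t)⁻¹ = -log s := by
    rw [intervalIntegral.integral_congr (g := fun t => t⁻¹) fun t ht => by
        rw [uIcc_of_le hs1] at ht
        simp [max_eq_right ht.1],
      integral_inv (by rw [uIcc_of_le hs1]; exact fun h => hs0.not_ge h.1),
      log_div one_ne_zero hs0.ne', log_one, zero_sub]
  rw [hflat, hlog]
  ring

lemma lintegral_Icc_inv_max_of_le_one {s : ℝ} (hs0 : 0 < s) (hs1 : s ≤ 1) :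
    ∫⁻ t in Icc (0:ℝ) 1, ENNReal.ofReal (max s t)⁻¹ = ENNReal.ofReal (1 - log s) := by
  have hpos : ∀ t, 0 < max s t := fun t => hs0.trans_le (le_max_left s t)
  have hcont : Continuous fun t : ℝ => (max s t)⁻¹ :=
    (continuous_const.max continuous_id).inv₀ fun t => (hpos t).ne'
  rw [← integral_inv_max_of_le_one hs0 hs1, intervalIntegral.integral_of_le zero_le_one,
    ← integral_Icc_eq_integral_Ioc, ofReal_integral_eq_lintegral_ofReal hcont.integrableOn_Icc
      (Filter.Eventually.of_forall fun t => (inv_pos.mpr (hpos t)).le)]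

lemma rpow_max_le_add_rpow {a b p : ℝ} (ha : 0 ≤ a) (hb : 0 ≤ b) (hp : 0 ≤ p) :
    max a b ^ p ≤ (a + b) ^ p := by
  gcongr
  exact max_le (by linarith) (by linarith)

lemma add_rpow_le_two_rpow_mul_max_rpow {a b p : ℝ} (ha : 0 ≤ a) (hb : 0 ≤ b) (hp : 0 ≤ p) :
    (a + b) ^ p ≤ 2 ^ p * max a b ^ p := by
  rw [← mul_rpow zero_le_two (le_max_of_le_left ha)]
  gcongr
  linarith [le_max_left a b, le_max_right a b]

lemma log_one_add_inv_le_one_sub_log {s : ℝ} (hs0 : 0 < s) (hs1 : s ≤ 1) :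
    log (1 + s⁻¹) ≤ 1 - log s :=
  calc log (1 + s⁻¹) ≤ log (2 * s⁻¹) :=
        log_le_log (by positivity) (by linarith [(one_le_inv₀ hs0).mpr hs1])
    _ = log 2 - log s := by rw [log_mul two_ne_zero (by positivity), log_inv]; ring
    _ ≤ 1 - log s := by linarith [log_two_lt_d9]

lemma one_sub_log_le_mul_log_one_add_inv {s : ℝ} (hs0 : 0 < s) (hs1 : s ≤ 1) :
    1 - log s ≤ (1 + 1 / log 2) * log (1 + s⁻¹) := by
  have hinv : 1 ≤ s⁻¹ := (one_le_inv₀ hs0).mpr hs1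
  have hlog2 : log 2 ≤ log (1 + s⁻¹) := log_le_log two_pos (by linarith)
  have hneg : -log s ≤ log (1 + s⁻¹) := by
    rw [← log_inv]
    exact log_le_log (by positivity) (by linarith)
  have hone : 1 ≤ log (1 + s⁻¹) / log 2 := (one_le_div (log_pos one_lt_two)).mpr hlog2
  calc 1 - log s ≤ log (1 + s⁻¹) / log 2 + log (1 + s⁻¹) := by linarith
    _ = (1 + 1 / log 2) * log (1 + s⁻¹) := by ring

section

variable {α β A : ℝ}

lemma max_rpow_le_add_rpow_rpow (hβ : 0 < β) (hαβ : α * β = 1) (hA : 0 ≤ A) {t : ℝ}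
    (ht : 0 ≤ t) :
    max (A ^ β) t ≤ (A + t ^ α) ^ β ∧ (A + t ^ α) ^ β ≤ 2 ^ β * max (A ^ β) t := by
  have htα : 0 ≤ t ^ α := rpow_nonneg ht α
  have hmax : max (A ^ β) t = max A (t ^ α) ^ β := by
    rw [rpow_max hA htα hβ.le, ← rpow_mul ht, hαβ, rpow_one]
  rw [hmax]
  exact ⟨rpow_max_le_add_rpow hA htα hβ.le, add_rpow_le_two_rpow_mul_max_rpow hA htα hβ.le⟩

lemma lintegral_inv_add_rpow_rpow_bounds (hβ : 0 < β) (hαβ : α * β = 1) (hA0 : 0 < A)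
    (hA1 : A ≤ 1) :
    ENNReal.ofReal (2 ^ (-β) * (1 - log (A ^ β))) ≤
        ∫⁻ t in Icc (0:ℝ) 1, ENNReal.ofReal (1 / (A + t ^ α) ^ β) ∧
      ∫⁻ t in Icc (0:ℝ) 1, ENNReal.ofReal (1 / (A + t ^ α) ^ β) ≤
        ENNReal.ofReal (1 - log (A ^ β)) := by
  set s := A ^ β
  have hs0 : 0 < s := rpow_pos_of_pos hA0 β
  have hs1 : s ≤ 1 := rpow_le_one hA0.le hA1 hβ.le
  have hbounds : ∀ t ∈ Icc (0:ℝ) 1, 2 ^ (-β) * (max s t)⁻¹ ≤ 1 / (A + t ^ α) ^ β ∧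
      1 / (A + t ^ α) ^ β ≤ (max s t)⁻¹ := by
    intro t ht
    obtain ⟨hlower, hupper⟩ := max_rpow_le_add_rpow_rpow hβ hαβ hA0.le ht.1
    have hpos : 0 < (A + t ^ α) ^ β :=
      rpow_pos_of_pos (add_pos_of_pos_of_nonneg hA0 (rpow_nonneg ht.1 α)) β
    rw [one_div, rpow_neg zero_le_two, ← mul_inv]
    exact ⟨inv_anti₀ hpos hupper, inv_anti₀ (hs0.trans_le (le_max_left s t)) hlower⟩
  rw [ENNReal.ofReal_mul (by positivity), ← lintegral_Icc_inv_max_of_le_one hs0 hs1,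
    ← lintegral_const_mul' _ _ ENNReal.ofReal_ne_top]
  constructor
  · refine setLIntegral_mono' measurableSet_Icc fun t ht => ?_
    rw [← ENNReal.ofReal_mul (by positivity)]
    exact ENNReal.ofReal_le_ofReal (hbounds t ht).1
  · exact setLIntegral_mono' measurableSet_Icc fun t ht =>
      ENNReal.ofReal_le_ofReal (hbounds t ht).2

end

theorem stmt1_general (α β : ℝ) (hβ : 0 < β) (hαβ : α * β = 1) :
    ∃ c C : ℝ, 0 < c ∧ c ≤ C ∧ ∀ A ∈ Set.Ioo (0:ℝ) 1,
      ENNReal.ofReal (c * Real.log (1 + A ^ (-(1/α)))) ≤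
        (∫⁻ t in Set.Icc (0:ℝ) 1, ENNReal.ofReal (1 / (A + t ^ α) ^ β)) ∧
      (∫⁻ t in Set.Icc (0:ℝ) 1, ENNReal.ofReal (1 / (A + t ^ α) ^ β)) ≤
        ENNReal.ofReal (C * Real.log (1 + A ^ (-(1/α)))) := by
  have hc1 : (2:ℝ) ^ (-β) ≤ 1 := rpow_le_one_of_one_le_of_nonpos one_le_two (by linarith)
  have hC1 : 0 ≤ 1 / log 2 := one_div_nonneg.mpr (log_nonneg one_le_two)
  refine ⟨2 ^ (-β), 1 + 1 / log 2, by positivity, by linarith, fun A ⟨hA0, hA1⟩ => ?_⟩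
  have hs0 : 0 < A ^ β := rpow_pos_of_pos hA0 β
  have hs1 : A ^ β ≤ 1 := rpow_le_one hA0.le hA1.le hβ.le
  rw [← eq_one_div_of_mul_eq_one_right hαβ, rpow_neg hA0.le]
  obtain ⟨hlower, hupper⟩ := lintegral_inv_add_rpow_rpow_bounds hβ hαβ hA0 hA1.le
  exact ⟨(ENNReal.ofReal_le_ofReal (mul_le_mul_of_nonneg_left
      (log_one_add_inv_le_one_sub_log hs0 hs1) (by positivity))).trans hlower,
    hupper.trans (ENNReal.ofReal_le_ofReal (one_sub_log_le_mul_log_one_add_inv hs0 hs1))⟩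

theorem stmt1 (α β : ℝ) (hα : 0 < α) (hβ : 0 < β) (hαβ : α * β = 1) :
    ∃ c C : ℝ, 0 < c ∧ c ≤ C ∧ ∀ A ∈ Set.Ioo (0:ℝ) 1,
      ENNReal.ofReal (c * Real.log (1 + A ^ (-(1/α)))) ≤
        (∫⁻ t in Set.Icc (0:ℝ) 1, ENNReal.ofReal (1 / (A + t ^ α) ^ β)) ∧
      (∫⁻ t in Set.Icc (0:ℝ) 1, ENNReal.ofReal (1 / (A + t ^ α) ^ β)) ≤
        ENNReal.ofReal (C * Real.log (1 + A ^ (-(1/α)))) :=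
  stmt1_general α β hβ hαβ
end

section
/- Let α, β > 0 be constants with αβ > 1. There exists a constant c > 0, depending only on α and β, such that for all A ∈ (0,1), all r > 0, all u* ∈ ℝ, every integer n ≥ 1 and all distinct points u₁, …, uₙ ∈ O(u*, r), one has ∫_{O(u*,r)} du / (A + min_{1≤j≤n} |u - u_j|^α)^β ≤ c · n · A^{-(β - 1/α)}. -/
/-!
The reciprocal of `A + min_j |u - u_j|^α`, raised to the power `β`, is at most the sum over `j` of
the single-point kernels `(A + |u - u_j|^α)^(-β)`, and by translation invariance each of these has
the same integral over `ℝ` as `k(x) = (A + |x|^α)^(-β)`. Split that integral at `|x| = A^(1/α)`: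
inside, `k ≤ A^(-β)` over an interval of length `2 A^(1/α)`; outside, `k ≤ |x|^(-αβ)`, which is
integrable at infinity because `αβ > 1`. Both pieces are constant multiples of `A^(1/α - β)`.
-/

open MeasureTheory Set

lemma apply_ciInf_le_sum {ι α : Type*} [Fintype ι] [Nonempty ι]
    [ConditionallyCompleteLinearOrder α] (g : α → ENNReal) (d : ι → α) :
    g (⨅ j, d j) ≤ ∑ j, g (d j) := by
  obtain ⟨j, hj⟩ := exists_eq_ciInf_of_finite (f := d)
  rw [← hj]
  exact Finset.single_le_sum (f := fun j => g (d j)) (fun _ _ => zero_le) (Finset.mem_univ j)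

lemma lintegral_compl_Icc_comp_abs (f : ℝ → ENNReal) {R : ℝ} (hR : 0 ≤ R) :
    ∫⁻ x in (Icc (-R) R)ᶜ, f |x| = 2 * ∫⁻ x in Ioi R, f x := by
  have hcompl : (Icc (-R) R)ᶜ = Iio (-R) ∪ Ioi R := by
    ext x
    simp only [mem_compl_iff, mem_Icc, not_and_or, not_le, mem_union, mem_Iio, mem_Ioi]
  have hright : ∫⁻ x in Ioi R, f |x| = ∫⁻ x in Ioi R, f x :=
    setLIntegral_congr_fun measurableSet_Ioi fun x hx => by
      rw [abs_of_pos (hR.trans_lt hx)]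
  have hleft : ∫⁻ x in Iio (-R), f |x| = ∫⁻ x in Ioi R, f |x| := by
    have := (Measure.measurePreserving_neg (volume : Measure ℝ)).setLIntegral_comp_preimage_emb
      (MeasurableEquiv.neg ℝ).measurableEmbedding (fun x => f |x|) (Ioi R)
    simpa only [neg_preimage, neg_Ioi, abs_neg] using this
  have hdisj : Disjoint (Iio (-R)) (Ioi R) :=
    (Iic_disjoint_Ioi (by linarith)).mono_left Iio_subset_Iic_self
  rw [hcompl, lintegral_union measurableSet_Ioi hdisj, hleft, hright, two_mul]

lemma lintegral_Ioi_rpow_of_lt {p R : ℝ} (hp : p < -1) (hR : 0 < R) :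
    ∫⁻ x in Ioi R, ENNReal.ofReal (x ^ p) = ENNReal.ofReal (-R ^ (p + 1) / (p + 1)) := by
  rw [← integral_Ioi_rpow_of_lt hp hR, ofReal_integral_eq_lintegral_ofReal
    (integrableOn_Ioi_rpow_of_lt hp hR)]
  filter_upwards [ae_restrict_mem measurableSet_Ioi] with x hx
  exact Real.rpow_nonneg (hR.trans hx).le p

section Kernel

variable {A α β : ℝ}

lemma one_div_add_abs_rpow_rpow_le_rpow_neg (hA : 0 < A) (hβ : 0 ≤ β) (x : ℝ) :
    1 / (A + |x| ^ α) ^ β ≤ A ^ (-β) := by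
  rw [Real.rpow_neg hA.le, ← one_div]
  gcongr
  exact le_add_of_nonneg_right (by positivity)

lemma one_div_add_abs_rpow_rpow_le_abs_rpow (hA : 0 ≤ A) (hβ : 0 ≤ β) {x : ℝ} (hx : x ≠ 0) :
    1 / (A + |x| ^ α) ^ β ≤ |x| ^ (-(α * β)) := by
  have hx : 0 < |x| := abs_pos.mpr hx
  rw [Real.rpow_neg hx.le, Real.rpow_mul hx.le, ← one_div]
  gcongr
  exact le_add_of_nonneg_left hA

lemma rpow_one_div_rpow_one_sub_mul (hA : 0 ≤ A) (hα : α ≠ 0) :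
    (A ^ (1 / α)) ^ (1 - α * β) = A ^ (1 / α - β) := by
  rw [← Real.rpow_mul hA]
  congr 1
  field_simp

theorem lintegral_one_div_add_abs_rpow_rpow_le (hα : 0 < α) (hαβ : 1 < α * β) (hA : 0 < A) :
    ∫⁻ x, ENNReal.ofReal (1 / (A + |x| ^ α) ^ β) ≤
      ENNReal.ofReal ((2 + 2 / (α * β - 1)) * A ^ (1 / α - β)) := by
  have hβ : 0 ≤ β := (pos_of_mul_pos_right (by linarith) hα.le).le
  have hd : 0 < α * β - 1 := by linarith
  -- the scale at which the two pointwise bounds `A ^ (-β)` and `|x| ^ (-(α * β))` cross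
  set R := A ^ (1 / α)
  have hR : 0 < R := by positivity
  have hcore : ∫⁻ x in Icc (-R) R, ENNReal.ofReal (1 / (A + |x| ^ α) ^ β) ≤
      ENNReal.ofReal (2 * A ^ (1 / α - β)) := by
    calc _ ≤ ∫⁻ _ in Icc (-R) R, ENNReal.ofReal (A ^ (-β)) :=
          lintegral_mono fun x => ENNReal.ofReal_le_ofReal
            (one_div_add_abs_rpow_rpow_le_rpow_neg hA hβ x)
      _ = ENNReal.ofReal (A ^ (-β) * (R - -R)) := by
          rw [setLIntegral_const, Real.volume_Icc, ← ENNReal.ofReal_mul (by positivity)]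
      _ = ENNReal.ofReal (2 * A ^ (1 / α - β)) := by
          rw [show A ^ (-β) * (R - -R) = 2 * (A ^ (-β) * R) by ring, ← Real.rpow_add hA,
            neg_add_eq_sub]
  have htail : ∫⁻ x in (Icc (-R) R)ᶜ, ENNReal.ofReal (1 / (A + |x| ^ α) ^ β) ≤
      ENNReal.ofReal (2 / (α * β - 1) * A ^ (1 / α - β)) := by
    calc _ ≤ ∫⁻ x in (Icc (-R) R)ᶜ, ENNReal.ofReal (|x| ^ (-(α * β))) := by
          refine setLIntegral_mono' measurableSet_Icc.compl fun x hx => ?_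
          refine ENNReal.ofReal_le_ofReal (one_div_add_abs_rpow_rpow_le_abs_rpow hA.le hβ ?_)
          rintro rfl
          exact hx ⟨by linarith, hR.le⟩
      _ = 2 * ENNReal.ofReal (-R ^ (-(α * β) + 1) / (-(α * β) + 1)) := by
          rw [lintegral_compl_Icc_comp_abs (fun t => ENNReal.ofReal (t ^ (-(α * β)))) hR.le,
            lintegral_Ioi_rpow_of_lt (by linarith) hR]
      _ = ENNReal.ofReal (2 / (α * β - 1) * A ^ (1 / α - β)) := by
          rw [show -(α * β) + 1 = 1 - α * β by ring, rpow_one_div_rpow_one_sub_mul hA.le hα.ne',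
            neg_div, ← div_neg, neg_sub, ← ENNReal.ofReal_ofNat 2,
            ← ENNReal.ofReal_mul zero_le_two]
          congr 1
          ring
  calc _ = (∫⁻ x in Icc (-R) R, ENNReal.ofReal (1 / (A + |x| ^ α) ^ β)) +
        ∫⁻ x in (Icc (-R) R)ᶜ, ENNReal.ofReal (1 / (A + |x| ^ α) ^ β) :=
        (lintegral_add_compl _ measurableSet_Icc).symm
    _ ≤ ENNReal.ofReal (2 * A ^ (1 / α - β)) +
        ENNReal.ofReal (2 / (α * β - 1) * A ^ (1 / α - β)) := add_le_add hcore htail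
    _ = ENNReal.ofReal ((2 + 2 / (α * β - 1)) * A ^ (1 / α - β)) := by
        rw [← ENNReal.ofReal_add (by positivity) (by positivity), add_mul]

end Kernel

theorem stmt3_general (α β : ℝ) (hα : 0 < α) (hαβ : 1 < α * β) :
    ∃ c : ℝ, 0 < c ∧ ∀ A ∈ Set.Ioo (0:ℝ) 1, ∀ r : ℝ, 0 < r → ∀ ustar : ℝ,
      ∀ n : ℕ, 1 ≤ n → ∀ u : Fin n → ℝ, Function.Injective u →
      (∀ j, u j ∈ Metric.ball ustar r) →
      (∫⁻ x in Metric.ball ustar r,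
          ENNReal.ofReal (1 / (A + (⨅ j, |x - u j|) ^ α) ^ β)) ≤
        ENNReal.ofReal (c * n * A ^ (-(β - 1/α))) := by
  have hd : 0 < α * β - 1 := by linarith
  refine ⟨2 + 2 / (α * β - 1), by positivity, ?_⟩
  rintro A ⟨hA, -⟩ r - ustar n hn u - -
  have : Nonempty (Fin n) := ⟨⟨0, hn⟩⟩
  set k : ℝ → ENNReal := fun x => ENNReal.ofReal (1 / (A + |x| ^ α) ^ β)
  calc _ ≤ ∫⁻ x, ∑ j, k (x - u j) :=
        (setLIntegral_le_lintegral _ _).trans <| lintegral_mono fun x =>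
          apply_ciInf_le_sum (fun t => ENNReal.ofReal (1 / (A + t ^ α) ^ β)) _
    _ = n * ∫⁻ x, k x := by
        rw [lintegral_finsetSum' _ fun j _ => by fun_prop]
        simp [lintegral_sub_right_eq_self]
    _ ≤ n * ENNReal.ofReal ((2 + 2 / (α * β - 1)) * A ^ (1 / α - β)) := by
        gcongr
        exact lintegral_one_div_add_abs_rpow_rpow_le hα hαβ hA
    _ = _ := by
        rw [← ENNReal.ofReal_natCast, ← ENNReal.ofReal_mul (Nat.cast_nonneg n), neg_sub]
        congr 1
        ring

theorem stmt3 (α β : ℝ) (hα : 0 < α) (hβ : 0 < β) (hαβ : 1 < α * β) :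
    ∃ c : ℝ, 0 < c ∧ ∀ A ∈ Set.Ioo (0:ℝ) 1, ∀ r : ℝ, 0 < r → ∀ ustar : ℝ,
      ∀ n : ℕ, 1 ≤ n → ∀ u : Fin n → ℝ, Function.Injective u →
      (∀ j, u j ∈ Metric.ball ustar r) →
      (∫⁻ x in Metric.ball ustar r,
          ENNReal.ofReal (1 / (A + (⨅ j, |x - u j|) ^ α) ^ β)) ≤
        ENNReal.ofReal (c * n * A ^ (-(β - 1/α))) :=
  stmt3_general α β hα hαβ
end

section
/- Let α, β > 0 be constants with αβ = 1, and let κ ∈ (0,1). There exists a constant c > 0, depending only on α, β and κ, such that for all A ∈ (0,1), all r > 0, all u* ∈ ℝ, every integer n ≥ 1 and all distinct points u₁, …, uₙ ∈ O(u*, r), one has ∫_{O(u*,r)} du / (A + min_{1≤j≤n} |u - u_j|^α)^β ≤ c · n · log( e + ( (r/n) · A^{-1/α} )^κ ). -/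
/-!
Write `D(x) = min_j |x - u_j|` and `B = A^(-β)`. Since `αβ = 1`, the integrand `G` satisfies
`G ≤ B` and `G ≤ 1 / D`, so `{G > t}` lies in the union of the `n` intervals of radius `1/t`
around the `u_j`. By the layer-cake formula the integral is at most
`∫_0^B min(2r, 2n/t) dt ≤ 2n (1 + log⁺ (r B / n))`, the two regimes meeting at `t = n/r`.
Finally `log⁺ z ≤ κ⁻¹ log (e + z^κ)` and `1 ≤ log (e + z^κ)`.
-/

open MeasureTheory Set
open scoped ENNReal Real

theorem lintegral_ofReal_le_setLIntegral_of_meas_lt_le {Ω : Type*} [MeasurableSpace Ω]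
    {μ : Measure Ω} {f : Ω → ℝ} {M : ℝ} {φ : ℝ → ℝ≥0∞} (hf : AEMeasurable f μ)
    (hf0 : 0 ≤ᵐ[μ] f) (hfM : ∀ᵐ x ∂μ, f x ≤ M)
    (hφ : ∀ t ∈ Ioo 0 M, μ {x | t < f x} ≤ φ t) :
    ∫⁻ x, ENNReal.ofReal (f x) ∂μ ≤ ∫⁻ t in Ioo 0 M, φ t := by
  have hmeas : ∀ t ∈ Ioi (0 : ℝ), μ {x | t < f x} ≤ (Ioo 0 M).indicator φ t := by
    intro t (ht : 0 < t)
    by_cases htM : t < M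
    · rw [indicator_of_mem (show t ∈ Ioo 0 M from ⟨ht, htM⟩)]
      exact hφ t ⟨ht, htM⟩
    · refine (measure_eq_zero_iff_ae_notMem.mpr ?_).trans_le bot_le
      filter_upwards [hfM] with x hx
      exact fun hx' => htM (hx'.trans_le hx)
  calc ∫⁻ x, ENNReal.ofReal (f x) ∂μ = ∫⁻ t in Ioi 0, μ {x | t < f x} :=
        lintegral_eq_lintegral_meas_lt μ hf0 hf
    _ ≤ ∫⁻ t in Ioi 0, (Ioo 0 M).indicator φ t := setLIntegral_mono' measurableSet_Ioi hmeas
    _ ≤ ∫⁻ t, (Ioo 0 M).indicator φ t := setLIntegral_le_lintegral _ _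
    _ = ∫⁻ t in Ioo 0 M, φ t := lintegral_indicator measurableSet_Ioo φ

theorem setLIntegral_min_const_div_le {a b B : ℝ} (ha : 0 < a) (hb : 0 < b) :
    ∫⁻ t in Ioo 0 B, min (ENNReal.ofReal a) (ENNReal.ofReal (b / t)) ≤
      ENNReal.ofReal (b * (1 + log⁺ (a * B / b))) := by
  set T := b / a with hT_def
  have hT : 0 < T := by positivity
  have hconst (s : ℝ) : ∫⁻ t in Ioc 0 s, min (ENNReal.ofReal a) (ENNReal.ofReal (b / t)) ≤
      ENNReal.ofReal (a * s) := by
    calc _ ≤ ∫⁻ _ in Ioc 0 s, ENNReal.ofReal a := lintegral_mono fun t => min_le_left _ _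
      _ = ENNReal.ofReal (a * s) := by
        rw [setLIntegral_const, Real.volume_Ioc, sub_zero, ENNReal.ofReal_mul ha.le]
  rcases le_or_gt B T with hBT | hTB
  · calc _ ≤ ∫⁻ t in Ioc 0 B, min (ENNReal.ofReal a) (ENNReal.ofReal (b / t)) :=
          lintegral_mono_set Ioo_subset_Ioc_self
      _ ≤ ENNReal.ofReal (a * B) := hconst B
      _ ≤ ENNReal.ofReal (b * (1 + log⁺ (a * B / b))) := by
        apply ENNReal.ofReal_le_ofReal
        have : a * B ≤ b := by rwa [le_div_iff₀' ha] at hBT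
        nlinarith [Real.posLog_nonneg (x := a * B / b)]
  · have hratio : 1 ≤ a * B / b := by
      rw [le_div_iff₀ hb]
      rw [div_lt_iff₀' ha] at hTB
      linarith
    have hlog : ∫⁻ t in Ioc T B, ENNReal.ofReal (b / t) =
        ENNReal.ofReal (b * Real.log (a * B / b)) := by
      have hint : IntegrableOn (fun t : ℝ => b / t) (Ioc T B) :=
        (ContinuousOn.integrableOn_Icc (continuousOn_const.div continuousOn_id
          fun t ht => (hT.trans_le ht.1).ne')).mono_set Ioc_subset_Icc_self
      rw [← ofReal_integral_eq_lintegral_ofReal hint, ← intervalIntegral.integral_of_le hTB.le]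
      · simp_rw [div_eq_mul_inv b, intervalIntegral.integral_const_mul,
          integral_inv_of_pos hT (hT.trans hTB), hT_def]
        congr 3
        field_simp
      · filter_upwards [ae_restrict_mem measurableSet_Ioc] with t ht
        exact (div_pos hb (hT.trans ht.1)).le
    calc _ ≤ ∫⁻ t in Ioc 0 T ∪ Ioc T B,
          min (ENNReal.ofReal a) (ENNReal.ofReal (b / t)) := by
          rw [Ioc_union_Ioc_eq_Ioc hT.le hTB.le]
          exact lintegral_mono_set Ioo_subset_Ioc_self
      _ ≤ ENNReal.ofReal (a * T) + ∫⁻ t in Ioc T B, ENNReal.ofReal (b / t) :=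
          (lintegral_union_le _ _ _).trans
            (add_le_add (hconst T) (lintegral_mono fun t => min_le_right _ _))
      _ = ENNReal.ofReal (b * (1 + log⁺ (a * B / b))) := by
        have hpos : 0 ≤ Real.log (a * B / b) := Real.log_nonneg hratio
        rw [hlog, ← ENNReal.ofReal_add (by positivity) (by positivity),
          Real.posLog_eq_log (by rwa [abs_of_pos (by positivity)]), hT_def,
          mul_div_cancel₀ _ ha.ne', mul_one_add]

theorem volume_setOf_iInf_abs_sub_lt_le {ι : Type*} [Fintype ι] [Nonempty ι]
    (u : ι → ℝ) (ρ : ℝ) :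
    volume {x | ⨅ j, |x - u j| < ρ} ≤ ENNReal.ofReal (2 * Fintype.card ι * ρ) := by
  have hsub : {x | ⨅ j, |x - u j| < ρ} ⊆ ⋃ j, Metric.ball (u j) ρ :=
    fun x (hx : ⨅ j, |x - u j| < ρ) => by
    obtain ⟨j, hj⟩ := exists_lt_of_ciInf_lt hx
    exact mem_iUnion.mpr ⟨j, by rwa [Metric.mem_ball, Real.dist_eq]⟩
  calc _ ≤ volume (⋃ j, Metric.ball (u j) ρ) := measure_mono hsub
    _ ≤ ∑ j, volume (Metric.ball (u j) ρ) := measure_iUnion_fintype_le _ _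
    _ = ENNReal.ofReal (2 * Fintype.card ι * ρ) := by
      rw [Finset.sum_congr rfl fun j _ => Real.volume_ball (u j) ρ, Finset.sum_const,
        Finset.card_univ, nsmul_eq_mul, ← ENNReal.ofReal_natCast,
        ← ENNReal.ofReal_mul (Nat.cast_nonneg _), ← mul_assoc, mul_comm (Fintype.card ι : ℝ)]

theorem le_rpow_add_rpow {α β A d : ℝ} (hβ : 0 ≤ β) (hαβ : α * β = 1) (hA : 0 ≤ A)
    (hd : 0 ≤ d) : d ≤ (A + d ^ α) ^ β :=
  calc d = (d ^ α) ^ β := by rw [← Real.rpow_mul hd, hαβ, Real.rpow_one]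
    _ ≤ (A + d ^ α) ^ β := by gcongr; linarith

theorem setLIntegral_ball_one_div_add_iInf_rpow_le {ι : Type*} [Fintype ι] [Nonempty ι]
    {α β A r : ℝ} (hβ : 0 ≤ β) (hαβ : α * β = 1) (hA : 0 < A) (hr : 0 < r) (c : ℝ)
    (u : ι → ℝ) :
    ∫⁻ x in Metric.ball c r, ENNReal.ofReal (1 / (A + (⨅ j, |x - u j|) ^ α) ^ β) ≤
      ENNReal.ofReal (2 * Fintype.card ι * (1 + log⁺ (r / Fintype.card ι * A ^ (-β)))) := by
  set n : ℝ := (Fintype.card ι : ℝ)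
  have hn : 0 < n := Nat.cast_pos.mpr Fintype.card_pos
  set D : ℝ → ℝ := fun x => ⨅ j, |x - u j|
  have hD : ∀ x, 0 ≤ D x := fun x => le_ciInf fun j => abs_nonneg _
  have hP : ∀ x, 0 < (A + D x ^ α) ^ β := fun x => by
    have := Real.rpow_nonneg (hD x) α
    positivity
  have hDm : Measurable D := Measurable.iInf fun j => by fun_prop
  have hG : Measurable fun x => 1 / (A + D x ^ α) ^ β := by fun_prop
  have hGM (x : ℝ) : 1 / (A + D x ^ α) ^ β ≤ A ^ (-β) := by
    rw [Real.rpow_neg hA.le, ← one_div]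
    gcongr
    exact le_add_of_nonneg_right (Real.rpow_nonneg (hD x) α)
  have hlevel (t : ℝ) (ht : 0 < t) : {x | t < 1 / (A + D x ^ α) ^ β} ⊆ {x | D x < 1 / t} :=
    fun x (hx : t < 1 / (A + D x ^ α) ^ β) =>
      (le_rpow_add_rpow hβ hαβ hA.le (hD x)).trans_lt ((lt_one_div ht (hP x)).mp hx)
  calc _ ≤ ∫⁻ t in Ioo 0 (A ^ (-β)),
          min (ENNReal.ofReal (2 * r)) (ENNReal.ofReal (2 * n / t)) := by
        refine lintegral_ofReal_le_setLIntegral_of_meas_lt_le hG.aemeasurable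
          (ae_of_all _ fun x => (one_div_pos.mpr (hP x)).le) (ae_of_all _ hGM) fun t ht => ?_
        refine le_min ?_ ?_
        · calc _ ≤ volume.restrict (Metric.ball c r) univ := measure_mono (subset_univ _)
            _ = ENNReal.ofReal (2 * r) := by
              rw [Measure.restrict_apply_univ, Real.volume_ball]
        · calc _ ≤ volume {x | t < 1 / (A + D x ^ α) ^ β} := Measure.restrict_le_self _
            _ ≤ volume {x | D x < 1 / t} := measure_mono (hlevel t ht.1)
            _ ≤ ENNReal.ofReal (2 * n / t) :=
              (volume_setOf_iInf_abs_sub_lt_le u (1 / t)).trans_eq (by rw [mul_one_div])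
    _ ≤ ENNReal.ofReal (2 * n * (1 + log⁺ (2 * r * A ^ (-β) / (2 * n)))) :=
        setLIntegral_min_const_div_le (by positivity) (by positivity)
    _ = ENNReal.ofReal (2 * n * (1 + log⁺ (r / n * A ^ (-β)))) := by
        congr 4
        field_simp

theorem one_add_posLog_le {κ z : ℝ} (hκ : 0 < κ) (hz : 0 ≤ z) :
    1 + log⁺ z ≤ (1 + κ⁻¹) * Real.log (Real.exp 1 + z ^ κ) := by
  have hzκ : 0 ≤ z ^ κ := Real.rpow_nonneg hz κ
  have hL : 1 ≤ Real.log (Real.exp 1 + z ^ κ) := by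
    rw [Real.le_log_iff_exp_le (by positivity)]
    linarith
  have hposLog : log⁺ z ≤ κ⁻¹ * Real.log (Real.exp 1 + z ^ κ) := by
    rw [Real.posLog_apply, max_le_iff]
    refine ⟨by positivity, ?_⟩
    rcases hz.eq_or_lt with rfl | hz
    · simp only [Real.log_zero]; positivity
    rw [le_inv_mul_iff₀ hκ, ← Real.log_rpow hz]
    exact Real.log_le_log (by positivity) (by linarith [Real.exp_pos 1])
  linarith

theorem stmt4_general (α β κ : ℝ) (hβ : 0 < β) (hαβ : α * β = 1)
    (hκ : κ ∈ Set.Ioo (0:ℝ) 1) :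
    ∃ c : ℝ, 0 < c ∧ ∀ A ∈ Set.Ioo (0:ℝ) 1, ∀ r : ℝ, 0 < r → ∀ ustar : ℝ,
      ∀ n : ℕ, 1 ≤ n → ∀ u : Fin n → ℝ, Function.Injective u →
      (∀ j, u j ∈ Metric.ball ustar r) →
      (∫⁻ x in Metric.ball ustar r,
          ENNReal.ofReal (1 / (A + (⨅ j, |x - u j|) ^ α) ^ β)) ≤
        ENNReal.ofReal (c * n *
          Real.log (Real.exp 1 + ((r / n) * A ^ (-(1/α))) ^ κ)) := by
  have hκ0 := hκ.1
  refine ⟨2 * (1 + κ⁻¹), by positivity, ?_⟩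
  rintro A ⟨hA, -⟩ r hr ustar n hn u - -
  have : Nonempty (Fin n) := ⟨⟨0, hn⟩⟩
  have hβα : β = 1 / α := eq_one_div_of_mul_eq_one_right hαβ
  set z := r / n * A ^ (-β)
  calc _ ≤ ENNReal.ofReal (2 * n * (1 + log⁺ z)) := by
        simpa using setLIntegral_ball_one_div_add_iInf_rpow_le hβ.le hαβ hA hr ustar u
    _ ≤ _ := by
      rw [← hβα]
      apply ENNReal.ofReal_le_ofReal
      have hz := one_add_posLog_le hκ0 (z := z) (by positivity)
      calc 2 * n * (1 + log⁺ z) ≤ 2 * n * ((1 + κ⁻¹) * Real.log (Real.exp 1 + z ^ κ)) := by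
            gcongr
        _ = _ := by ring

theorem stmt4 (α β κ : ℝ) (hα : 0 < α) (hβ : 0 < β) (hαβ : α * β = 1)
    (hκ : κ ∈ Set.Ioo (0:ℝ) 1) :
    ∃ c : ℝ, 0 < c ∧ ∀ A ∈ Set.Ioo (0:ℝ) 1, ∀ r : ℝ, 0 < r → ∀ ustar : ℝ,
      ∀ n : ℕ, 1 ≤ n → ∀ u : Fin n → ℝ, Function.Injective u →
      (∀ j, u j ∈ Metric.ball ustar r) →
      (∫⁻ x in Metric.ball ustar r,
          ENNReal.ofReal (1 / (A + (⨅ j, |x - u j|) ^ α) ^ β)) ≤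
        ENNReal.ofReal (c * n *
          Real.log (Real.exp 1 + ((r / n) * A ^ (-(1/α))) ^ κ)) :=
  stmt4_general α β κ hβ hαβ hκ
end

section
/- Let 0 < β < 1 be a constant. There exists a constant c > 0, depending only on β, such that for all constants r > 0 and M > 0, all u* ∈ ℝ, every integer n ≥ 1 and all distinct points u₁, …, uₙ ∈ O(u*, r), one has ∫_{O(u*,r)} log( e + M · (min_{1≤j≤n} |u - u_j|)^{-β} ) du ≤ c · r · log( e + M · (r/n)^{-β} ). -/
/-!
Let `s x` be the distance from `x` to the nearest `u j`, `ρ = r / n` and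
`L = log (e + M ρ^{-β}) ≥ 1`. If `ρ e^{-m} ≤ s x` then `s x ^ {-β} ≤ ρ^{-β} e^{β m}`, so the
integrand is at most `L + β m`; taking the least such `m`, the integrand is at most `L` plus `β`
times the number of levels `k` with `s x < ρ e^{-k}`. The `k`-th level set is covered by `n`
intervals of length `2 ρ e^{-k}`, so integrating the level counts gives at most `4 β r` by a
geometric series, and the whole integral is at most `2 r L + 4 β r ≤ (2 + 4 β) r L`.
-/

open MeasureTheory Set Real
open scoped ENNReal

lemma one_le_log_exp_one_add {a : ℝ} (ha : 0 ≤ a) : 1 ≤ log (exp 1 + a) := by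
  simpa using log_le_log (exp_pos 1) (le_add_of_nonneg_right ha)

lemma rpow_neg_le_of_mul_exp_neg_le {β ρ s : ℝ} {m : ℕ} (hβ : 0 ≤ β) (hρ : 0 < ρ)
    (hs : ρ * exp (-m) ≤ s) : s ^ (-β) ≤ ρ ^ (-β) * exp (β * m) :=
  calc s ^ (-β) ≤ (ρ * exp (-m)) ^ (-β) :=
        rpow_le_rpow_of_nonpos (by positivity) hs (by linarith)
    _ = ρ ^ (-β) * exp (β * m) := by
        rw [mul_rpow hρ.le (exp_pos _).le, ← exp_mul]
        ring_nf

lemma log_exp_one_add_mul_rpow_le {β M ρ s : ℝ} {m : ℕ} (hβ : 0 ≤ β) (hM : 0 ≤ M) (hρ : 0 < ρ)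
    (hs : ρ * exp (-m) ≤ s) :
    log (exp 1 + M * s ^ (-β)) ≤ log (exp 1 + M * ρ ^ (-β)) + β * m := by
  have hle : exp 1 + M * s ^ (-β) ≤ (exp 1 + M * ρ ^ (-β)) * exp (β * m) := by
    have hMs := mul_le_mul_of_nonneg_left (rpow_neg_le_of_mul_exp_neg_le hβ hρ hs) hM
    have hexp : 1 ≤ exp (β * m) := one_le_exp (by positivity)
    nlinarith [exp_pos 1]
  have hs0 : 0 < s := hs.trans_lt' (by positivity)
  calc log (exp 1 + M * s ^ (-β)) ≤ log ((exp 1 + M * ρ ^ (-β)) * exp (β * m)) :=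
        log_le_log (by have := rpow_nonneg hs0.le (-β); positivity) hle
    _ = log (exp 1 + M * ρ ^ (-β)) + β * m := by
        rw [log_mul (by positivity) (exp_pos _).ne', log_exp]

lemma exists_least_nat_mul_exp_neg_le {ρ s : ℝ} (hρ : 0 < ρ) (hs : 0 < s) :
    ∃ m : ℕ, ρ * exp (-m) ≤ s ∧ ∀ k < m, s < ρ * exp (-k) := by
  refine ⟨⌈log (ρ / s)⌉₊, ?_, fun k hk => ?_⟩
  · rw [exp_neg, mul_inv_le_iff₀ (exp_pos _), ← div_le_iff₀' hs]
    calc ρ / s = exp (log (ρ / s)) := (exp_log (by positivity)).symm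
      _ ≤ exp ⌈log (ρ / s)⌉₊ := exp_le_exp.2 (Nat.le_ceil _)
  · have := exp_lt_exp.2 (Nat.lt_ceil.1 hk)
    rw [exp_log (by positivity), lt_div_iff₀ hs] at this
    rw [exp_neg, ← div_eq_mul_inv, lt_div_iff₀ (exp_pos _)]
    linarith

lemma setLIntegral_le_add_tsum_measure {X : Type*} [MeasurableSpace X] {μ : Measure X}
    {f : X → ℝ≥0∞} {E : ℕ → Set X} (hE : ∀ k, MeasurableSet (E k)) {c a : ℝ≥0∞}
    (hf : ∀ x, f x ≤ c + ∑' k, (E k).indicator (fun _ => a) x) (s : Set X) :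
    ∫⁻ x in s, f x ∂μ ≤ c * μ s + a * ∑' k, μ (E k) :=
  calc ∫⁻ x in s, f x ∂μ ≤ ∫⁻ x in s, c + ∑' k, (E k).indicator (fun _ => a) x ∂μ :=
        lintegral_mono hf
    _ ≤ c * μ s + ∫⁻ x, ∑' k, (E k).indicator (fun _ => a) x ∂μ := by
        rw [lintegral_add_left measurable_const, setLIntegral_const]
        gcongr
        exact Measure.restrict_le_self
    _ = c * μ s + a * ∑' k, μ (E k) := by
        rw [lintegral_tsum fun k => (measurable_const.indicator (hE k)).aemeasurable]
        simp [lintegral_indicator_const (hE _), ENNReal.tsum_mul_left]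

section

variable {ι : Type*} [Fintype ι] (u : ι → ℝ)

lemma mem_iUnion_ball_iff_iInf_abs_sub_lt [Nonempty ι] {x t : ℝ} :
    x ∈ ⋃ j, Metric.ball (u j) t ↔ ⨅ j, |x - u j| < t := by
  rw [ciInf_lt_iff (Finite.bddBelow_range _)]
  simp [Real.dist_eq]

lemma volume_iUnion_ball_le (t : ℝ) :
    volume (⋃ j, Metric.ball (u j) t) ≤ Fintype.card ι * ENNReal.ofReal (2 * t) :=
  calc volume (⋃ j, Metric.ball (u j) t) ≤ ∑ j, volume (Metric.ball (u j) t) :=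
        measure_iUnion_fintype_le _ _
    _ = Fintype.card ι * ENNReal.ofReal (2 * t) := by simp [Real.volume_ball]

lemma ofReal_log_le_add_tsum_indicator [Nonempty ι] {β M ρ : ℝ} (hβ : 0 < β) (hM : 0 ≤ M)
    (hρ : 0 < ρ) (x : ℝ) :
    ENNReal.ofReal (log (exp 1 + M * (⨅ j, |x - u j|) ^ (-β))) ≤
      ENNReal.ofReal (log (exp 1 + M * ρ ^ (-β))) +
        ∑' k : ℕ, (⋃ j, Metric.ball (u j) (ρ * exp (-k))).indicator
          (fun _ => ENNReal.ofReal β) x := by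
  set s := ⨅ j, |x - u j|
  have hL := one_le_log_exp_one_add (a := M * ρ ^ (-β)) (by positivity)
  obtain hs | hs : 0 = s ∨ 0 < s := (le_ciInf fun j => abs_nonneg (x - u j)).eq_or_lt
  · -- `0 ^ (-β) = 0` in Lean, so at the points `u j` the integrand is just `log e = 1`
    rw [← hs, zero_rpow (by simpa using hβ.ne'), mul_zero, add_zero, log_exp]
    exact le_add_right (ENNReal.ofReal_le_ofReal hL)
  · obtain ⟨m, hm, hlt⟩ := exists_least_nat_mul_exp_neg_le hρ hs
    calc ENNReal.ofReal (log (exp 1 + M * s ^ (-β)))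
        ≤ ENNReal.ofReal (log (exp 1 + M * ρ ^ (-β)) + β * m) :=
          ENNReal.ofReal_le_ofReal (log_exp_one_add_mul_rpow_le hβ.le hM hρ hm)
      _ = ENNReal.ofReal (log (exp 1 + M * ρ ^ (-β))) + ∑ k ∈ Finset.range m,
            (⋃ j, Metric.ball (u j) (ρ * exp (-k))).indicator (fun _ => ENNReal.ofReal β) x := by
          rw [ENNReal.ofReal_add (by linarith) (by positivity), Finset.sum_congr rfl fun k hk =>
            indicator_of_mem ((mem_iUnion_ball_iff_iInf_abs_sub_lt u).2
              (hlt k (Finset.mem_range.1 hk))) _]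
          simp [ENNReal.ofReal_mul hβ.le, mul_comm]
      _ ≤ _ := by gcongr; exact ENNReal.sum_le_tsum _

lemma tsum_volume_iUnion_ball_exp_neg_le {ρ : ℝ} (hρ : 0 < ρ) :
    ∑' k : ℕ, volume (⋃ j, Metric.ball (u j) (ρ * exp (-k))) ≤
      Fintype.card ι * ENNReal.ofReal (4 * ρ) := by
  have hexp : ∀ k : ℕ, exp (-k) ≤ 2⁻¹ ^ k := fun k => by
    rw [exp_neg, inv_pow, ← exp_one_pow]
    gcongr
    linarith [add_one_le_exp 1]
  calc ∑' k : ℕ, volume (⋃ j, Metric.ball (u j) (ρ * exp (-k)))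
      ≤ ∑' k : ℕ, Fintype.card ι * ENNReal.ofReal (2 * ρ) * 2⁻¹ ^ k := by
        refine ENNReal.tsum_le_tsum fun k => (volume_iUnion_ball_le u _).trans ?_
        rw [mul_assoc]
        gcongr
        calc ENNReal.ofReal (2 * (ρ * exp (-k))) ≤ ENNReal.ofReal (2 * ρ * 2⁻¹ ^ k) :=
              ENNReal.ofReal_le_ofReal (by rw [← mul_assoc]; gcongr; exact hexp k)
          _ = ENNReal.ofReal (2 * ρ) * 2⁻¹ ^ k := by
              rw [ENNReal.ofReal_mul (by positivity), ENNReal.ofReal_pow (by positivity),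
                ENNReal.ofReal_inv_of_pos two_pos, ENNReal.ofReal_ofNat]
    _ = Fintype.card ι * ENNReal.ofReal (4 * ρ) := by
        rw [ENNReal.tsum_mul_left, ENNReal.tsum_geometric, ENNReal.one_sub_inv_two, inv_inv,
          mul_assoc, ← ENNReal.ofReal_ofNat 2, ← ENNReal.ofReal_mul (by positivity)]
        ring_nf

end

theorem lintegral_ball_log_exp_one_add_rpow_iInf_le {ι : Type*} [Fintype ι] [Nonempty ι]
    (u : ι → ℝ) {β M r : ℝ} (hβ : 0 < β) (hM : 0 ≤ M) (hr : 0 < r) (a : ℝ) :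
    ∫⁻ x in Metric.ball a r, ENNReal.ofReal (log (exp 1 + M * (⨅ j, |x - u j|) ^ (-β))) ≤
      ENNReal.ofReal ((2 + 4 * β) * r * log (exp 1 + M * (r / Fintype.card ι) ^ (-β))) := by
  have hn : (0 : ℝ) < Fintype.card ι := by simp [Fintype.card_pos]
  set L := log (exp 1 + M * (r / Fintype.card ι) ^ (-β))
  have hL : 1 ≤ L := one_le_log_exp_one_add (by positivity)
  calc ∫⁻ x in Metric.ball a r, ENNReal.ofReal (log (exp 1 + M * (⨅ j, |x - u j|) ^ (-β)))
      ≤ ENNReal.ofReal L * volume (Metric.ball a r) + ENNReal.ofReal β *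
          ∑' k : ℕ, volume (⋃ j, Metric.ball (u j) (r / Fintype.card ι * exp (-k))) :=
        setLIntegral_le_add_tsum_measure
          (fun k => (isOpen_iUnion fun j => Metric.isOpen_ball).measurableSet)
          (ofReal_log_le_add_tsum_indicator u hβ hM (by positivity)) _
    _ ≤ ENNReal.ofReal L * ENNReal.ofReal (2 * r) +
          ENNReal.ofReal β * (Fintype.card ι * ENNReal.ofReal (4 * (r / Fintype.card ι))) := by
        rw [Real.volume_ball]
        gcongr
        exact tsum_volume_iUnion_ball_exp_neg_le u (by positivity)
    _ ≤ ENNReal.ofReal ((2 + 4 * β) * r * L) := by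
        rw [← ENNReal.ofReal_natCast, ← ENNReal.ofReal_mul (by positivity),
          ← ENNReal.ofReal_mul (by positivity), ← ENNReal.ofReal_mul (by positivity),
          ← ENNReal.ofReal_add (by positivity) (by positivity)]
        refine ENNReal.ofReal_le_ofReal ?_
        rw [show (Fintype.card ι : ℝ) * (4 * (r / Fintype.card ι)) = 4 * r by field_simp]
        nlinarith [mul_nonneg (mul_nonneg hβ.le hr.le) (sub_nonneg.2 hL)]

theorem stmt6_general (β : ℝ) (hβ : 0 < β) :
    ∃ c : ℝ, 0 < c ∧ ∀ r : ℝ, 0 < r → ∀ M : ℝ, 0 < M → ∀ ustar : ℝ,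
      ∀ n : ℕ, 1 ≤ n → ∀ u : Fin n → ℝ, Function.Injective u →
      (∀ j, u j ∈ Metric.ball ustar r) →
      (∫⁻ x in Metric.ball ustar r,
          ENNReal.ofReal (Real.log (Real.exp 1 + M * (⨅ j, |x - u j|) ^ (-β)))) ≤
        ENNReal.ofReal (c * r * Real.log (Real.exp 1 + M * (r / n) ^ (-β))) := by
  refine ⟨2 + 4 * β, by positivity, fun r hr M hM ustar n hn u _ _ => ?_⟩
  have : Nonempty (Fin n) := ⟨⟨0, hn⟩⟩
  simpa using lintegral_ball_log_exp_one_add_rpow_iInf_le u hβ hM.le hr ustar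

theorem stmt6 (β : ℝ) (hβ : 0 < β) (hβ1 : β < 1) :
    ∃ c : ℝ, 0 < c ∧ ∀ r : ℝ, 0 < r → ∀ M : ℝ, 0 < M → ∀ ustar : ℝ,
      ∀ n : ℕ, 1 ≤ n → ∀ u : Fin n → ℝ, Function.Injective u →
      (∀ j, u j ∈ Metric.ball ustar r) →
      (∫⁻ x in Metric.ball ustar r,
          ENNReal.ofReal (Real.log (Real.exp 1 + M * (⨅ j, |x - u j|) ^ (-β)))) ≤
        ENNReal.ofReal (c * r * Real.log (Real.exp 1 + M * (r / n) ^ (-β))) :=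
  stmt6_general β hβ
end

section
/- Let N ≥ 1 be an integer, H = (H₁, …, H_N) ∈ (0,1)^N and γ > 0 a real number. Then the Lebesgue integral ∫_{[0,1]^N} ds / (∑_{j=1}^N s_j^{H_j})^γ is finite if and only if ∑_{j=1}^N 1/H_j > γ. -/
/-!
Write `A = ∑ 1 / H j`. Weighted AM–GM with weights `(1 / H j) / A` gives
`∑ s j ^ H j ≥ ∏ s j ^ (1 / A)`, so the integrand is dominated by `∏ s j ^ (-γ / A)`, a product
of one-variable functions integrable on `[0, 1]` as soon as `γ < A`. Conversely, the anisotropic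
box `∏ [0, r ^ (1 / H j)]` has volume `r ^ A` and the sum is at most `N r` on it, so the integral
over the shell between the boxes of sizes `r` and `r / 2` is at least
`N ^ (-γ) (1 - 2 ^ (-A)) r ^ (A - γ)`. When `A ≤ γ` this is bounded below uniformly in `r ≤ 1`,
and the dyadic shells `r = 2 ^ (-k)` are disjoint, so the integral is infinite.
-/

open MeasureTheory Set
open scoped ENNReal

variable {ι : Type*}

namespace Real

theorem prod_rpow_inv_sum_one_div_le_sum_rpow [Fintype ι] {s H : ι → ℝ} (hs : ∀ j, 0 ≤ s j)
    (hH : ∀ j, 0 < H j) (hA : 0 < ∑ j, 1 / H j) :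
    ∏ j, s j ^ (∑ i, 1 / H i)⁻¹ ≤ ∑ j, s j ^ H j := by
  set A := ∑ i, 1 / H i
  have hw : ∑ j, (1 / H j) / A = 1 := by rw [← Finset.sum_div, div_self hA.ne']
  calc ∏ j, s j ^ A⁻¹ = ∏ j, (s j ^ H j) ^ ((1 / H j) / A) := by
        refine Finset.prod_congr rfl fun j _ => ?_
        rw [← rpow_mul (hs j)]
        congr 1
        field_simp [(hH j).ne']
    _ ≤ ∑ j, (1 / H j) / A * s j ^ H j :=
        geom_mean_le_arith_mean_weighted _ _ _ (fun j _ => by have := hH j; positivity) hw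
          fun j _ => rpow_nonneg (hs j) _
    _ ≤ ∑ j, s j ^ H j := by
        refine Finset.sum_le_sum fun j _ => mul_le_of_le_one_left (rpow_nonneg (hs j) _) ?_
        rw [div_le_one hA]
        exact Finset.single_le_sum (f := fun i => 1 / H i)
          (fun i _ => (one_div_pos.2 (hH i)).le) (Finset.mem_univ j)

theorem inv_rpow_sum_rpow_le_prod_rpow [Fintype ι] {s H : ι → ℝ} (hs : ∀ j, 0 < s j)
    (hH : ∀ j, 0 < H j) (hA : 0 < ∑ j, 1 / H j) {γ : ℝ} (hγ : 0 ≤ γ) :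
    ((∑ j, s j ^ H j) ^ γ)⁻¹ ≤ ∏ j, s j ^ (-(γ / ∑ i, 1 / H i)) := by
  have hP : 0 < ∏ j, s j ^ (∑ i, 1 / H i)⁻¹ :=
    Finset.prod_pos fun j _ => rpow_pos_of_pos (hs j) _
  calc ((∑ j, s j ^ H j) ^ γ)⁻¹ ≤ ((∏ j, s j ^ (∑ i, 1 / H i)⁻¹) ^ γ)⁻¹ :=
        inv_anti₀ (rpow_pos_of_pos hP _) <| rpow_le_rpow hP.le
          (prod_rpow_inv_sum_one_div_le_sum_rpow (fun j => (hs j).le) hH hA) hγ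
    _ = ∏ j, s j ^ (-(γ / ∑ i, 1 / H i)) := by
        rw [← rpow_neg hP.le, ← finsetProd_rpow _ _ fun j _ => (rpow_nonneg (hs j).le _)]
        refine Finset.prod_congr rfl fun j _ => ?_
        rw [← rpow_mul (hs j).le]
        ring_nf

end Real

theorem integrableOn_Ioc_rpow_neg {p : ℝ} (hp : p < 1) :
    IntegrableOn (fun x : ℝ => x ^ (-p)) (Ioc 0 1) := by
  rw [integrableOn_Ioc_iff_integrableOn_Ioo]
  exact (intervalIntegral.integrableOn_Ioo_rpow_iff one_pos).2 (by linarith)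

theorem lintegral_inv_rpow_sum_rpow_ne_top [Fintype ι] {H : ι → ℝ} (hH : ∀ j, 0 < H j) {γ : ℝ}
    (hγ : 0 ≤ γ) (hγA : γ < ∑ j, 1 / H j) :
    ∫⁻ s in univ.pi (fun _ : ι => Icc (0 : ℝ) 1),
      (ENNReal.ofReal ((∑ j, s j ^ H j) ^ γ))⁻¹ ≠ ⊤ := by
  set A := ∑ j, 1 / H j
  have hA : 0 < A := hγ.trans_lt hγA
  obtain ⟨j₀, -, -⟩ := Finset.exists_ne_zero_of_sum_ne_zero hA.ne'
  have hdom : Integrable (fun s : ι → ℝ => ∏ j, s j ^ (-(γ / A)))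
      (Measure.pi fun _ => volume.restrict (Ioc 0 1)) :=
    Integrable.fintype_prod fun _ => integrableOn_Ioc_rpow_neg ((div_lt_one hA).2 hγA)
  have hbound : ∀ s ∈ univ.pi (fun _ : ι => Ioc (0 : ℝ) 1),
      (ENNReal.ofReal ((∑ j, s j ^ H j) ^ γ))⁻¹ ≤ ENNReal.ofReal (∏ j, s j ^ (-(γ / A))) := by
    intro s hs
    have hs₀ : ∀ j, 0 < s j := fun j => (hs j (mem_univ j)).1
    have hsum : 0 < ∑ j, s j ^ H j :=
      Finset.sum_pos (fun j _ => Real.rpow_pos_of_pos (hs₀ j) _) ⟨j₀, Finset.mem_univ _⟩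
    rw [← ENNReal.ofReal_inv_of_pos (Real.rpow_pos_of_pos hsum _)]
    exact ENNReal.ofReal_le_ofReal (Real.inv_rpow_sum_rpow_le_prod_rpow hs₀ hH hA hγ)
  refine lt_top_iff_ne_top.mp ?_
  calc ∫⁻ s in univ.pi (fun _ : ι => Icc (0 : ℝ) 1), (ENNReal.ofReal ((∑ j, s j ^ H j) ^ γ))⁻¹
      = ∫⁻ s in univ.pi (fun _ : ι => Ioc (0 : ℝ) 1), (ENNReal.ofReal ((∑ j, s j ^ H j) ^ γ))⁻¹ :=
        setLIntegral_congr (Measure.ae_eq_set_pi fun _ _ => Ioc_ae_eq_Icc).symm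
    _ ≤ ∫⁻ s in univ.pi (fun _ : ι => Ioc (0 : ℝ) 1), ENNReal.ofReal (∏ j, s j ^ (-(γ / A))) :=
        setLIntegral_mono' (MeasurableSet.univ_pi fun _ => measurableSet_Ioc) hbound
    _ < ⊤ := by
        rw [volume_pi, Measure.restrict_pi_pi]
        exact hdom.lintegral_lt_top

theorem lintegral_eq_top_of_le_setLIntegral_diff {α : Type*} [MeasurableSpace α]
    {μ : Measure α} {f : α → ℝ≥0∞} {B : ℕ → Set α} (hB : Antitone B)
    (hBm : ∀ k, MeasurableSet (B k)) {ε : ℝ≥0∞} (hε : ε ≠ 0)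
    (h : ∀ k, ε ≤ ∫⁻ x in B k \ B (k + 1), f x ∂μ) : ∫⁻ x in B 0, f x ∂μ = ⊤ := by
  have hdisj : Pairwise (Function.onFun Disjoint fun k => B k \ B (k + 1)) := by
    refine (pairwise_disjoint_on _).2 fun k l hkl => disjoint_left.2 fun x hxk hxl => ?_
    exact hxk.2 (hB hkl hxl.1)
  refine top_le_iff.1 ?_
  calc ⊤ = ∑' _ : ℕ, ε := (ENNReal.tsum_const_eq_top_of_ne_zero hε).symm
    _ ≤ ∑' k, ∫⁻ x in B k \ B (k + 1), f x ∂μ := ENNReal.tsum_le_tsum h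
    _ = ∫⁻ x in ⋃ k, B k \ B (k + 1), f x ∂μ :=
        (lintegral_iUnion (fun k => (hBm k).diff (hBm (k + 1))) hdisj f).symm
    _ ≤ ∫⁻ x in B 0, f x ∂μ :=
        lintegral_mono_set (iUnion_subset fun k => sdiff_subset.trans (hB k.zero_le))

def anisotropicBox (H : ι → ℝ) (r : ℝ) : Set (ι → ℝ) :=
  univ.pi fun j => Icc 0 (r ^ (1 / H j))

section anisotropicBox

variable {H : ι → ℝ} {r : ℝ}

theorem anisotropicBox_one (H : ι → ℝ) :
    anisotropicBox H 1 = univ.pi fun _ => Icc 0 1 := by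
  simp [anisotropicBox]

theorem measurableSet_anisotropicBox [Countable ι] : MeasurableSet (anisotropicBox H r) :=
  MeasurableSet.univ_pi fun _ => measurableSet_Icc

theorem anisotropicBox_mono (hH : ∀ j, 0 < H j) {r' : ℝ} (hr : 0 ≤ r) (hrr' : r ≤ r') :
    anisotropicBox H r ⊆ anisotropicBox H r' :=
  pi_mono fun j _ => Icc_subset_Icc le_rfl <|
    Real.rpow_le_rpow hr hrr' (one_div_pos.2 (hH j)).le

theorem volume_anisotropicBox [Fintype ι] (hr : 0 < r) :
    volume (anisotropicBox H r) = ENNReal.ofReal (r ^ ∑ j, 1 / H j) := by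
  rw [anisotropicBox, volume_pi_pi]
  simp only [Real.volume_Icc, sub_zero]
  rw [← ENNReal.ofReal_prod_of_nonneg fun j _ => Real.rpow_nonneg hr.le _,
    Real.rpow_sum_of_pos hr]

theorem sum_rpow_le_of_mem_anisotropicBox [Fintype ι] (hH : ∀ j, 0 < H j) (hr : 0 ≤ r)
    {s : ι → ℝ} (hs : s ∈ anisotropicBox H r) : ∑ j, s j ^ H j ≤ Fintype.card ι * r := by
  have hsj : ∀ j, s j ∈ Icc 0 (r ^ (1 / H j)) := fun j => hs j (mem_univ j)
  calc ∑ j, s j ^ H j ≤ ∑ _j : ι, r := Finset.sum_le_sum fun j _ => by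
        calc s j ^ H j ≤ (r ^ (1 / H j)) ^ H j :=
              Real.rpow_le_rpow (hsj j).1 (hsj j).2 (hH j).le
          _ = r := by rw [← Real.rpow_mul hr, one_div_mul_cancel (hH j).ne', Real.rpow_one]
    _ = Fintype.card ι * r := by simp

theorem le_setLIntegral_anisotropicBox_diff [Fintype ι] [Nonempty ι] (hH : ∀ j, 0 < H j)
    (hr₀ : 0 < r) (hr₁ : r ≤ 1) {γ : ℝ} (hAγ : ∑ j, 1 / H j ≤ γ) :
    ENNReal.ofReal (((Fintype.card ι : ℝ) ^ γ)⁻¹ * (1 - (2 : ℝ)⁻¹ ^ ∑ j, 1 / H j)) ≤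
      ∫⁻ s in anisotropicBox H r \ anisotropicBox H (r / 2),
        (ENNReal.ofReal ((∑ j, s j ^ H j) ^ γ))⁻¹ := by
  set A := ∑ j, 1 / H j
  set N : ℝ := (Fintype.card ι : ℝ)
  have hA : 0 < A := Finset.sum_pos (fun j _ => one_div_pos.2 (hH j)) Finset.univ_nonempty
  have hN : 0 < N := Nat.cast_pos.2 Fintype.card_pos
  have hNr : 0 < (N * r) ^ γ := Real.rpow_pos_of_pos (by positivity) _
  have hsub : anisotropicBox H (r / 2) ⊆ anisotropicBox H r :=
    anisotropicBox_mono hH (half_pos hr₀).le (half_le_self hr₀.le)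
  have hvol : volume (anisotropicBox H r \ anisotropicBox H (r / 2)) =
      ENNReal.ofReal (r ^ A - (r / 2) ^ A) := by
    rw [measure_sdiff hsub measurableSet_anisotropicBox.nullMeasurableSet
      (by rw [volume_anisotropicBox (half_pos hr₀)]; exact ENNReal.ofReal_ne_top),
      volume_anisotropicBox hr₀, volume_anisotropicBox (half_pos hr₀),
      ENNReal.ofReal_sub _ (Real.rpow_nonneg (half_pos hr₀).le _)]
  have hreal : (N ^ γ)⁻¹ * (1 - (2 : ℝ)⁻¹ ^ A) ≤ ((N * r) ^ γ)⁻¹ * (r ^ A - (r / 2) ^ A) := by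
    have hrγ : r ^ γ ≤ r ^ A := Real.rpow_le_rpow_of_exponent_ge hr₀ hr₁ hAγ
    have hhalf : 0 ≤ 1 - (2 : ℝ)⁻¹ ^ A :=
      sub_nonneg.2 (Real.rpow_le_one (by norm_num) (by norm_num) hA.le)
    have hrγA : 1 ≤ r ^ A / r ^ γ := (one_le_div (Real.rpow_pos_of_pos hr₀ _)).2 hrγ
    calc (N ^ γ)⁻¹ * (1 - (2 : ℝ)⁻¹ ^ A) = (N ^ γ)⁻¹ * 1 * (1 - (2 : ℝ)⁻¹ ^ A) := by ring
      _ ≤ (N ^ γ)⁻¹ * (r ^ A / r ^ γ) * (1 - (2 : ℝ)⁻¹ ^ A) :=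
        mul_le_mul_of_nonneg_right (mul_le_mul_of_nonneg_left hrγA (by positivity)) hhalf
      _ = ((N * r) ^ γ)⁻¹ * (r ^ A - (r / 2) ^ A) := by
        rw [div_eq_mul_inv r, Real.mul_rpow hr₀.le (by norm_num), Real.mul_rpow hN.le hr₀.le]
        ring
  calc ENNReal.ofReal ((N ^ γ)⁻¹ * (1 - (2 : ℝ)⁻¹ ^ A))
      ≤ (ENNReal.ofReal ((N * r) ^ γ))⁻¹ *
          volume (anisotropicBox H r \ anisotropicBox H (r / 2)) := by
        rw [hvol, ← ENNReal.ofReal_inv_of_pos hNr, ← ENNReal.ofReal_mul (inv_pos.2 hNr).le]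
        exact ENNReal.ofReal_le_ofReal hreal
    _ = ∫⁻ _ in anisotropicBox H r \ anisotropicBox H (r / 2),
          (ENNReal.ofReal ((N * r) ^ γ))⁻¹ :=
        (setLIntegral_const _ _).symm
    _ ≤ _ := by
        refine setLIntegral_mono' (measurableSet_anisotropicBox.diff measurableSet_anisotropicBox)
          fun s hs => ENNReal.inv_le_inv' (ENNReal.ofReal_le_ofReal ?_)
        exact Real.rpow_le_rpow
          (Finset.sum_nonneg fun j _ => Real.rpow_nonneg (hs.1 j (mem_univ j)).1 _)
          (sum_rpow_le_of_mem_anisotropicBox hH hr₀.le hs.1) (hA.le.trans hAγ)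

end anisotropicBox

theorem lintegral_inv_rpow_sum_rpow_eq_top [Fintype ι] [Nonempty ι] {H : ι → ℝ}
    (hH : ∀ j, 0 < H j) {γ : ℝ} (hAγ : ∑ j, 1 / H j ≤ γ) :
    ∫⁻ s in univ.pi (fun _ : ι => Icc (0 : ℝ) 1),
      (ENNReal.ofReal ((∑ j, s j ^ H j) ^ γ))⁻¹ = ⊤ := by
  have hA : 0 < ∑ j, 1 / H j :=
    Finset.sum_pos (fun j _ => one_div_pos.2 (hH j)) Finset.univ_nonempty
  have hε : 0 < ((Fintype.card ι : ℝ) ^ γ)⁻¹ * (1 - (2 : ℝ)⁻¹ ^ ∑ j, 1 / H j) :=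
    mul_pos (inv_pos.2 (Real.rpow_pos_of_pos (Nat.cast_pos.2 Fintype.card_pos) _))
      (sub_pos.2 (Real.rpow_lt_one (by norm_num) (by norm_num) hA))
  have hr : ∀ k : ℕ, 0 < (2 : ℝ)⁻¹ ^ k := fun k => by positivity
  rw [← anisotropicBox_one H, ← pow_zero (2 : ℝ)⁻¹]
  refine lintegral_eq_top_of_le_setLIntegral_diff
    (B := fun k => anisotropicBox H ((2 : ℝ)⁻¹ ^ k))
    (antitone_nat_of_succ_le fun k => anisotropicBox_mono hH (hr _).le ?_)
    (fun _ => measurableSet_anisotropicBox) (ENNReal.ofReal_pos.2 hε).ne' fun k => ?_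
  · exact pow_le_pow_of_le_one (by norm_num) (by norm_num) k.le_succ
  · simpa only [pow_succ, ← div_eq_mul_inv] using
      le_setLIntegral_anisotropicBox_diff hH (hr k) (pow_le_one₀ (by norm_num) (by norm_num)) hAγ

theorem stmt7 (N : ℕ) (hN : 1 ≤ N) (H : Fin N → ℝ)
    (hH : ∀ j, H j ∈ Set.Ioo (0:ℝ) 1) (γ : ℝ) (hγ : 0 < γ) :
    (∫⁻ s in Set.univ.pi (fun _ : Fin N => Set.Icc (0:ℝ) 1),
        (ENNReal.ofReal ((∑ j, s j ^ H j) ^ γ))⁻¹) ≠ ⊤ ↔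
      γ < ∑ j, 1 / H j := by
  have : Nonempty (Fin N) := ⟨⟨0, hN⟩⟩
  have hH₀ : ∀ j, 0 < H j := fun j => (hH j).1
  refine ⟨fun hfin => ?_, lintegral_inv_rpow_sum_rpow_ne_top hH₀ hγ.le⟩
  by_contra! hAγ
  exact hfin (lintegral_inv_rpow_sum_rpow_eq_top hH₀ hAγ)
end

section
/- Let N ≥ 1 be an integer, H = (H₁, …, H_N) ∈ (0,1)^N and γ > 0 a real number with ∑_{j=1}^N 1/H_j > γ. Then the Lebesgue integral ∫_{[0,1]^N × [0,1]^N} ds dt / ( [∑_{j=1}^N s_j^{2H_j}]^{γ/2} · [∑_{j=1}^N min{|s_j - t_j|^{2H_j}, t_j^{2H_j}}]^{γ/2} ) is finite. -/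
open MeasureTheory Set
open scoped ENNReal

/-!
Weighted AM–GM with weights `1 / (2 H_j S)`, `S = ∑ 1 / (2 H_j)`, gives
`(∑ x_j ^ (2 H_j)) ^ (-γ/2) ≤ ∏ x_j ^ (-e)` with `e = γ / ∑ 1 / H_j < 1`. Applied to `x = s` and to
`x_j = min |s_j - t_j| t_j`, this dominates the integrand by a product of one-variable functions,
and Tonelli reduces finiteness to `∫₀¹ u ^ (-e) du < ∞` together with
`(min |s - t| t) ^ (-e) ≤ |s - t| ^ (-e) + t ^ (-e)`.
-/

theorem lintegral_fin_nat_prod_eq_prod {n : ℕ} {E : Type*}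
    [MeasurableSpace E] {μ : Fin n → Measure E} [∀ i, SigmaFinite (μ i)]
    (f : Fin n → E → ℝ≥0∞) (hf : ∀ i, Measurable (f i)) :
    ∫⁻ x : Fin n → E, ∏ i, f i (x i) ∂(Measure.pi μ) = ∏ i, ∫⁻ x, f i x ∂(μ i) := by
  induction n with
  | zero => simp
  | succ n ih =>
      calc
        _ = ∫⁻ x : E × (Fin n → E),
            f 0 x.1 * ∏ i : Fin n, f (Fin.succ i) (x.2 i)
            ∂((μ 0).prod (Measure.pi (fun i ↦ μ i.succ))) := by
          rw [← ((measurePreserving_piFinSuccAbove μ 0).symm).lintegral_comp_emb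
            (MeasurableEquiv.measurableEmbedding _)]
          simp_rw [MeasurableEquiv.piFinSuccAbove_symm_apply, Fin.insertNthEquiv,
            Fin.prod_univ_succ, Fin.insertNth_zero, Equiv.coe_fn_mk, Fin.cons_succ,
            Fin.zero_succAbove, cast_eq, Fin.cons_zero]
        _ = (∫⁻ x, f 0 x ∂μ 0) * ∏ i : Fin n, ∫⁻ x, f i.succ x ∂(μ i.succ) := by
          rw [← ih _ fun i ↦ hf i.succ, ← lintegral_prod_mul (hf 0).aemeasurable
            (Finset.measurable_prod _ fun i _ ↦
              (hf i.succ).comp (measurable_pi_apply i)).aemeasurable]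
        _ = ∏ i, ∫⁻ x, f i x ∂(μ i) := by rw [Fin.prod_univ_succ]

theorem lintegral_fintype_prod_eq_prod {ι : Type*} [Fintype ι] {E : Type*}
    [MeasurableSpace E] {μ : ι → Measure E} [∀ i, SigmaFinite (μ i)]
    (f : ι → E → ℝ≥0∞) (hf : ∀ i, Measurable (f i)) :
    ∫⁻ x : ι → E, ∏ i, f i (x i) ∂(Measure.pi μ) = ∏ i, ∫⁻ x, f i x ∂(μ i) := by
  let e := (Fintype.equivFin ι).symm
  rw [← (measurePreserving_piCongrLeft _ e).lintegral_comp_emb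
    (MeasurableEquiv.measurableEmbedding _)]
  simp_rw [← e.prod_comp, MeasurableEquiv.coe_piCongrLeft, Equiv.piCongrLeft_apply_apply]
  exact lintegral_fin_nat_prod_eq_prod _ fun i ↦ hf (e i)

theorem setLIntegral_univ_pi_prod_eq_prod {ι X : Type*} [Fintype ι] [MeasureSpace X]
    [SigmaFinite (volume : Measure X)] (s : ι → Set X) (f : ι → X → ℝ≥0∞)
    (hf : ∀ i, Measurable (f i)) :
    ∫⁻ x in univ.pi s, ∏ i, f i (x i) = ∏ i, ∫⁻ y in s i, f i y := by
  rw [volume_pi, Measure.restrict_pi_pi, lintegral_fintype_prod_eq_prod f hf]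

theorem setLIntegral_pi_prod_pi_le {ι X : Type*} [Fintype ι] [MeasureSpace X]
    [SigmaFinite (volume : Measure X)] {s : Set X} (hs : MeasurableSet s) {f : X → ℝ≥0∞}
    {g : X → X → ℝ≥0∞} (hf : Measurable f) (hg : Measurable (Function.uncurry g)) {C : ℝ≥0∞}
    (hC : ∀ x ∈ s, ∫⁻ y in s, g x y ≤ C) :
    ∫⁻ p in univ.pi (fun _ : ι ↦ s) ×ˢ univ.pi (fun _ : ι ↦ s),
        (∏ i, f (p.1 i)) * ∏ i, g (p.1 i) (p.2 i)
      ≤ (∫⁻ x in s, f x) ^ Fintype.card ι * C ^ Fintype.card ι := by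
  set box := univ.pi fun _ : ι ↦ s
  have hgi : ∀ x : X, Measurable (g x) := fun x ↦ hg.comp measurable_prodMk_left
  have hG : Measurable fun p : (ι → X) × (ι → X) ↦
      (∏ i, f (p.1 i)) * ∏ i, g (p.1 i) (p.2 i) := by
    have hg_coord : ∀ i, Measurable fun p : (ι → X) × (ι → X) ↦ g (p.1 i) (p.2 i) :=
      fun i ↦ hg.comp (f := fun p : (ι → X) × (ι → X) ↦ (p.1 i, p.2 i)) (by fun_prop)
    fun_prop
  calc ∫⁻ p in box ×ˢ box, (∏ i, f (p.1 i)) * ∏ i, g (p.1 i) (p.2 i)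
      = ∫⁻ x in box, (∏ i, f (x i)) * ∏ i, ∫⁻ y in s, g (x i) y := by
        rw [Measure.volume_eq_prod, ← Measure.prod_restrict, lintegral_prod _ hG.aemeasurable]
        refine lintegral_congr fun x ↦ ?_
        dsimp only
        rw [lintegral_const_mul _ (by fun_prop),
          setLIntegral_univ_pi_prod_eq_prod _ (fun i ↦ g (x i)) fun i ↦ hgi (x i)]
    _ ≤ ∫⁻ x in box, (∏ i, f (x i)) * C ^ Fintype.card ι := by
        refine setLIntegral_mono' (MeasurableSet.univ_pi fun _ ↦ hs) fun x hx ↦ ?_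
        gcongr
        rw [← Finset.card_univ, ← Finset.prod_const]
        exact Finset.prod_le_prod' fun i _ ↦ hC (x i) (hx i (mem_univ i))
    _ = (∫⁻ x in s, f x) ^ Fintype.card ι * C ^ Fintype.card ι := by
        rw [lintegral_mul_const _ (by fun_prop),
          setLIntegral_univ_pi_prod_eq_prod _ (fun _ ↦ f) fun _ ↦ hf, Finset.prod_const,
          Finset.card_univ]

theorem setLIntegral_Icc_abs_sub_le {f : ℝ → ℝ≥0∞} (hf : Measurable f) {s : ℝ}
    (hs : s ∈ Icc (0 : ℝ) 1) :
    ∫⁻ t in Icc 0 1, f |s - t| ≤ 2 * ∫⁻ u in Icc 0 1, f u := by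
  set g := (Icc (0 : ℝ) 1).indicator f
  have hg : Measurable g := hf.indicator measurableSet_Icc
  have hpt : ∀ t ∈ Icc (0 : ℝ) 1, f |s - t| ≤ g (s - t) + g (t - s) := by
    intro t ht
    rcases le_total t s with h | h
    · rw [abs_of_nonneg (sub_nonneg.2 h)]
      exact (indicator_of_mem (by constructor <;> linarith [hs.2, ht.1]) f).ge.trans le_self_add
    · rw [abs_of_nonpos (sub_nonpos.2 h), neg_sub]
      exact (indicator_of_mem (by constructor <;> linarith [hs.1, ht.2]) f).ge.trans le_add_self
  calc ∫⁻ t in Icc 0 1, f |s - t| ≤ ∫⁻ t in Icc 0 1, (g (s - t) + g (t - s)) :=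
        setLIntegral_mono' measurableSet_Icc hpt
    _ ≤ ∫⁻ t, (g (s - t) + g (t - s)) := setLIntegral_le_lintegral _ _
    _ = 2 * ∫⁻ u in Icc 0 1, f u := by
        rw [lintegral_add_left (f := fun t ↦ g (s - t)) (by fun_prop),
          lintegral_sub_left_eq_self, lintegral_sub_right_eq_self,
          lintegral_indicator measurableSet_Icc, two_mul]

theorem setLIntegral_Icc_ofReal_rpow_neg_lt_top {e : ℝ} (he : e < 1) :
    ∫⁻ u in Icc (0 : ℝ) 1, ENNReal.ofReal u ^ (-e) < ∞ := by
  rw [← Measure.restrict_congr_set Ioc_ae_eq_Icc,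
    setLIntegral_congr_fun measurableSet_Ioc fun u hu ↦ ENNReal.ofReal_rpow_of_pos hu.1]
  have hint : IntegrableOn (fun u : ℝ ↦ u ^ (-e)) (Ioc 0 1) :=
    (intervalIntegrable_iff_integrableOn_Ioc_of_le zero_le_one).1
      (intervalIntegral.intervalIntegrable_rpow' (by linarith))
  exact (lintegral_mono fun u ↦ Real.ofReal_le_enorm _).trans_lt hint.2

theorem setLIntegral_Icc_min_abs_sub_rpow_neg_le (e : ℝ) {s : ℝ} (hs : s ∈ Icc (0 : ℝ) 1) :
    ∫⁻ t in Icc 0 1, ENNReal.ofReal (min |s - t| t) ^ (-e)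
      ≤ 3 * ∫⁻ u in Icc 0 1, ENNReal.ofReal u ^ (-e) := by
  have hpt : ∀ t, ENNReal.ofReal (min |s - t| t) ^ (-e)
      ≤ ENNReal.ofReal |s - t| ^ (-e) + ENNReal.ofReal t ^ (-e) := fun t ↦ by
    rcases min_cases |s - t| t with ⟨h, _⟩ | ⟨h, _⟩ <;> rw [h]
    exacts [le_self_add, le_add_self]
  calc ∫⁻ t in Icc 0 1, ENNReal.ofReal (min |s - t| t) ^ (-e)
      ≤ ∫⁻ t in Icc 0 1, (ENNReal.ofReal |s - t| ^ (-e) + ENNReal.ofReal t ^ (-e)) :=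
        lintegral_mono hpt
    _ = (∫⁻ t in Icc 0 1, ENNReal.ofReal |s - t| ^ (-e))
          + ∫⁻ t in Icc 0 1, ENNReal.ofReal t ^ (-e) := lintegral_add_left (by fun_prop) _
    _ ≤ 2 * (∫⁻ u in Icc 0 1, ENNReal.ofReal u ^ (-e))
          + ∫⁻ t in Icc 0 1, ENNReal.ofReal t ^ (-e) := by
        gcongr
        exact setLIntegral_Icc_abs_sub_le (f := fun u ↦ ENNReal.ofReal u ^ (-e)) (by fun_prop) hs
    _ = 3 * ∫⁻ u in Icc 0 1, ENNReal.ofReal u ^ (-e) := by ring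

theorem Real.prod_rpow_inv_sum_inv_le_sum_rpow {ι : Type*} [Fintype ι] [Nonempty ι] {a : ι → ℝ}
    (ha : ∀ i, 0 < a i) {x : ι → ℝ} (hx : ∀ i, 0 ≤ x i) :
    ∏ i, x i ^ (∑ j, 1 / a j)⁻¹ ≤ ∑ i, x i ^ a i := by
  set S := ∑ j, 1 / a j
  have hS : 0 < S := Finset.sum_pos (fun j _ ↦ one_div_pos.2 (ha j)) Finset.univ_nonempty
  have hw : ∀ i, 0 ≤ 1 / (a i * S) := fun i ↦ (one_div_pos.2 (mul_pos (ha i) hS)).le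
  have hw_sum : ∑ i, 1 / (a i * S) = 1 := by
    simp_rw [← div_div, ← Finset.sum_div]
    exact div_self hS.ne'
  have hw_le : ∀ i, 1 / (a i * S) ≤ 1 := fun i ↦
    (Finset.single_le_sum (f := fun j ↦ 1 / (a j * S)) (fun j _ ↦ hw j)
      (Finset.mem_univ i)).trans_eq hw_sum
  calc ∏ i, x i ^ S⁻¹ = ∏ i, (x i ^ a i) ^ (1 / (a i * S)) := by
        refine Finset.prod_congr rfl fun i _ ↦ ?_
        rw [← Real.rpow_mul (hx i), mul_one_div, div_mul_eq_div_div, div_self (ha i).ne', one_div]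
    _ ≤ ∑ i, 1 / (a i * S) * x i ^ a i :=
        Real.geom_mean_le_arith_mean_weighted _ _ _ (fun i _ ↦ hw i) hw_sum
          fun i _ ↦ Real.rpow_nonneg (hx i) _
    _ ≤ ∑ i, x i ^ a i :=
        Finset.sum_le_sum fun i _ ↦ mul_le_of_le_one_left (Real.rpow_nonneg (hx i) _) (hw_le i)

theorem ENNReal.ofReal_sum_rpow_rpow_neg_le_prod {ι : Type*} [Fintype ι] [Nonempty ι]
    {a : ι → ℝ} (ha : ∀ i, 0 < a i) {β : ℝ} (hβ : 0 ≤ β) {x : ι → ℝ} (hx : ∀ i, 0 ≤ x i) :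
    ENNReal.ofReal (∑ i, x i ^ a i) ^ (-β)
      ≤ ∏ i, ENNReal.ofReal (x i) ^ (-(β / ∑ j, 1 / a j)) := by
  set S := ∑ j, 1 / a j
  have hS : 0 < S := Finset.sum_pos (fun j _ ↦ one_div_pos.2 (ha j)) Finset.univ_nonempty
  calc ENNReal.ofReal (∑ i, x i ^ a i) ^ (-β)
      ≤ ENNReal.ofReal (∏ i, x i ^ S⁻¹) ^ (-β) := by
        rw [ENNReal.rpow_neg, ENNReal.rpow_neg]
        gcongr
        exact Real.prod_rpow_inv_sum_inv_le_sum_rpow ha hx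
    _ = ∏ i, ENNReal.ofReal (x i) ^ (-(β / S)) := by
        rw [ENNReal.ofReal_prod_of_nonneg fun i _ ↦ Real.rpow_nonneg (hx i) _,
          ← ENNReal.prod_rpow_of_ne_top fun i _ ↦ ENNReal.ofReal_ne_top]
        refine Finset.prod_congr rfl fun i _ ↦ ?_
        rw [← ENNReal.ofReal_rpow_of_nonneg (hx i) (inv_nonneg.2 hS.le), ← ENNReal.rpow_mul]
        ring_nf

theorem ENNReal.inv_ofReal_rpow_mul_rpow {x y c : ℝ} (hx : 0 ≤ x) (hy : 0 ≤ y) (hc : 0 ≤ c) :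
    (ENNReal.ofReal (x ^ c * y ^ c))⁻¹ = ENNReal.ofReal x ^ (-c) * ENNReal.ofReal y ^ (-c) := by
  rw [ENNReal.ofReal_mul (Real.rpow_nonneg hx c), ← ENNReal.ofReal_rpow_of_nonneg hx hc,
    ← ENNReal.ofReal_rpow_of_nonneg hy hc,
    ENNReal.mul_inv (.inr (ENNReal.rpow_ne_top_of_nonneg hc ENNReal.ofReal_ne_top))
      (.inl (ENNReal.rpow_ne_top_of_nonneg hc ENNReal.ofReal_ne_top)),
    ENNReal.rpow_neg, ENNReal.rpow_neg]

theorem Real.min_rpow {x y c : ℝ} (hx : 0 ≤ x) (hy : 0 ≤ y) (hc : 0 ≤ c) :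
    min (x ^ c) (y ^ c) = min x y ^ c :=
  ((Real.monotoneOn_rpow_Ici_of_exponent_nonneg hc).map_min hx hy).symm

theorem ENNReal.inv_ofReal_sum_rpow_mul_sum_min_rpow_le {ι : Type*} [Fintype ι] [Nonempty ι]
    {a : ι → ℝ} (ha : ∀ i, 0 < a i) {c : ℝ} (hc : 0 ≤ c) {s t : ι → ℝ} (hs : ∀ i, 0 ≤ s i)
    (ht : ∀ i, 0 ≤ t i) :
    (ENNReal.ofReal ((∑ i, s i ^ a i) ^ c * (∑ i, min (|s i - t i| ^ a i) (t i ^ a i)) ^ c))⁻¹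
      ≤ (∏ i, ENNReal.ofReal (s i) ^ (-(c / ∑ j, 1 / a j)))
          * ∏ i, ENNReal.ofReal (min |s i - t i| (t i)) ^ (-(c / ∑ j, 1 / a j)) := by
  have hm : ∀ i, 0 ≤ min |s i - t i| (t i) := fun i ↦ le_min (abs_nonneg _) (ht i)
  simp only [Real.min_rpow (abs_nonneg _) (ht _) (ha _).le]
  rw [ENNReal.inv_ofReal_rpow_mul_rpow (Finset.sum_nonneg fun i _ ↦ Real.rpow_nonneg (hs i) _)
    (Finset.sum_nonneg fun i _ ↦ Real.rpow_nonneg (hm i) _) hc]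
  exact mul_le_mul' (ENNReal.ofReal_sum_rpow_rpow_neg_le_prod ha hc hs)
    (ENNReal.ofReal_sum_rpow_rpow_neg_le_prod ha hc hm)

theorem stmt8 (N : ℕ) (hN : 1 ≤ N) (H : Fin N → ℝ)
    (hH : ∀ j, H j ∈ Set.Ioo (0:ℝ) 1) (γ : ℝ) (hγ : 0 < γ)
    (hcond : γ < ∑ j, 1 / H j) :
    (∫⁻ p in ((Set.univ.pi fun _ : Fin N => Set.Icc (0:ℝ) 1) ×ˢ
        (Set.univ.pi fun _ : Fin N => Set.Icc (0:ℝ) 1)),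
        (ENNReal.ofReal
          ((∑ j, p.1 j ^ (2 * H j)) ^ (γ / 2) *
            (∑ j, min (|p.1 j - p.2 j| ^ (2 * H j)) (p.2 j ^ (2 * H j))) ^
              (γ / 2)))⁻¹) ≠ ⊤ := by
  have : Nonempty (Fin N) := ⟨⟨0, hN⟩⟩
  have ha : ∀ j, 0 < 2 * H j := fun j ↦ by linarith [(hH j).1]
  have he : γ / 2 / ∑ j, 1 / (2 * H j) < 1 := by
    have hsum : ∑ j, 1 / (2 * H j) = (∑ j, 1 / H j) / 2 := by
      rw [Finset.sum_div]; exact Finset.sum_congr rfl fun j _ ↦ by ring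
    rw [hsum, div_lt_one (by linarith)]; linarith
  set e := γ / 2 / ∑ j, 1 / (2 * H j)
  have hE : ∫⁻ u in Icc (0 : ℝ) 1, ENNReal.ofReal u ^ (-e) ≠ ⊤ :=
    (setLIntegral_Icc_ofReal_rpow_neg_lt_top he).ne
  have hcube : MeasurableSet (univ.pi fun _ : Fin N ↦ Icc (0 : ℝ) 1) :=
    MeasurableSet.univ_pi fun _ ↦ measurableSet_Icc
  refine ne_top_of_le_ne_top ?_ ((setLIntegral_mono' (hcube.prod hcube) ?_).trans
    (setLIntegral_pi_prod_pi_le measurableSet_Icc (f := fun u ↦ ENNReal.ofReal u ^ (-e))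
      (g := fun s t ↦ ENNReal.ofReal (min |s - t| t) ^ (-e)) (by fun_prop)
      (by unfold Function.uncurry; fun_prop)
      fun s hs ↦ setLIntegral_Icc_min_abs_sub_rpow_neg_le e hs))
  · exact ENNReal.mul_ne_top (ENNReal.pow_ne_top hE)
      (ENNReal.pow_ne_top (ENNReal.mul_ne_top ENNReal.ofNat_ne_top hE))
  · rintro ⟨s, t⟩ ⟨hs, ht⟩
    exact ENNReal.inv_ofReal_sum_rpow_mul_sum_min_rpow_le ha (by positivity)
      (fun j ↦ (hs j (mem_univ j)).1) (fun j ↦ (ht j (mem_univ j)).1)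
end

section
/- Let N ≥ 1 be an integer, H = (H₁, …, H_N) ∈ (0,1)^N and γ > 0 a real number with ∑_{j=1}^N 1/H_j ≤ γ. Then for any reals 0 ≤ a < b ≤ 1, the Lebesgue integral ∫_{[a,b]^N × [a,b]^N} ds dt / (∑_{j=1}^N |s_j - t_j|^{H_j})^γ is infinite. -/
/-!
Let `σ = ∑ⱼ 1 / Hⱼ` and let `E r` be the set of pairs `(s, t)` of points of the cube with
`|sⱼ - tⱼ| ≤ r ^ (1 / Hⱼ)` for all `j`. Slicing along `s` shows that `vol (E r)` lies between
`(b - a) ^ N r ^ σ` and `2 ^ N (b - a) ^ N r ^ σ`, so, because `σ > N`, the shell `E r \ E (r / 2)`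
still has volume at least `c r ^ σ` with `c > 0`. On `E r` the integrand is at least
`(N r) ^ (-γ) ≥ N ^ (-γ) r ^ (-σ)` (as `r ≤ 1` and `γ ≥ σ`), so each of the infinitely many
disjoint shells `E (r₀ / 2 ^ k) \ E (r₀ / 2 ^ (k + 1))` contributes at least `c N ^ (-γ)`.
-/

open MeasureTheory Set

theorem setLIntegral_eq_top_of_antitone {α : Type*} [MeasurableSpace α] {μ : Measure α}
    {f : α → ENNReal} {s : Set α} {E : ℕ → Set α} (hE : Antitone E)
    (hEm : ∀ k, MeasurableSet (E k)) (hEs : E 0 ⊆ s) {ε : ENNReal} (hε : ε ≠ 0)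
    (h : ∀ k, ε ≤ ∫⁻ x in E k \ E (k + 1), f x ∂μ) :
    ∫⁻ x in s, f x ∂μ = ⊤ := by
  have hdisj : Pairwise (Function.onFun Disjoint fun k => E k \ E (k + 1)) :=
    (pairwise_disjoint_on _).2 fun k l hkl =>
      disjoint_left.2 fun _ hk hl => hk.2 (hE (Nat.succ_le_of_lt hkl) hl.1)
  refine eq_top_iff.2 ?_
  calc ⊤ = ∑' _ : ℕ, ε := (ENNReal.tsum_const_eq_top_of_ne_zero hε).symm
    _ ≤ ∑' k, ∫⁻ x in E k \ E (k + 1), f x ∂μ := ENNReal.tsum_le_tsum h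
    _ = ∫⁻ x in ⋃ k, E k \ E (k + 1), f x ∂μ :=
      (lintegral_iUnion (fun k => (hEm k).diff (hEm _)) hdisj f).symm
    _ ≤ ∫⁻ x in s, f x ∂μ :=
      lintegral_mono_set <| iUnion_subset fun k =>
        sdiff_subset.trans ((hE k.zero_le).trans hEs)

theorem le_min_add_sub_max_sub {a b x δ : ℝ} (hx : x ∈ Icc a b) (hδ : 0 ≤ δ)
    (hδab : δ ≤ b - a) : δ ≤ min b (x + δ) - max a (x - δ) := by
  obtain ⟨hax, hxb⟩ := hx
  simp only [min_def, max_def]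
  split_ifs <;> linarith

theorem min_add_sub_max_sub_le (a b x δ : ℝ) : min b (x + δ) - max a (x - δ) ≤ 2 * δ := by
  linarith [min_le_right b (x + δ), le_max_right a (x - δ)]

section Cube

variable {ι : Type*}

def cube (ι : Type*) (a b : ℝ) : Set (ι → ℝ) := univ.pi fun _ => Icc a b

theorem measurableSet_cube [Countable ι] (a b : ℝ) : MeasurableSet (cube ι a b) :=
  MeasurableSet.univ_pi fun _ => measurableSet_Icc

theorem volume_cube [Fintype ι] {a b : ℝ} (hab : a ≤ b) :
    volume (cube ι a b) = ENNReal.ofReal ((b - a) ^ Fintype.card ι) := by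
  simp [cube, Real.volume_Icc_pi, ENNReal.ofReal_pow (sub_nonneg.2 hab)]

def diagNhd (a b : ℝ) (d : ι → ℝ) : Set ((ι → ℝ) × (ι → ℝ)) :=
  cube ι a b ×ˢ cube ι a b ∩ {p | ∀ j, |p.1 j - p.2 j| ≤ d j}

theorem measurableSet_diagNhd [Countable ι] (a b : ℝ) (d : ι → ℝ) :
    MeasurableSet (diagNhd a b d) := by
  refine ((measurableSet_cube a b).prod (measurableSet_cube a b)).inter ?_
  simp only [ofPred_forall]
  exact MeasurableSet.iInter fun j => measurableSet_le (by fun_prop) measurable_const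

theorem diagNhd_mono {a b : ℝ} {d d' : ι → ℝ} (h : d ≤ d') : diagNhd a b d ⊆ diagNhd a b d' :=
  fun _ hp => ⟨hp.1, fun j => (hp.2 j).trans (h j)⟩

theorem preimage_mk_diagNhd {a b : ℝ} (d : ι → ℝ) {s : ι → ℝ} (hs : s ∈ cube ι a b) :
    Prod.mk s ⁻¹' diagNhd a b d =
      univ.pi fun j => Icc (max a (s j - d j)) (min b (s j + d j)) := by
  ext t
  simp only [cube, mem_pi, mem_univ, true_implies, mem_Icc] at hs
  simp only [diagNhd, cube, mem_preimage, mem_inter_iff, mem_prod, mem_pi, mem_univ,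
    true_implies, mem_Icc, mem_ofPred_eq, abs_sub_le_iff, max_le_iff, le_min_iff]
  grind

theorem volume_diagNhd [Fintype ι] (a b : ℝ) (d : ι → ℝ) :
    volume (diagNhd a b d) =
      ∫⁻ s in cube ι a b, ∏ j, ENNReal.ofReal (min b (s j + d j) - max a (s j - d j)) := by
  rw [Measure.volume_eq_prod, Measure.prod_apply (measurableSet_diagNhd a b d),
    ← setLIntegral_eq_of_support_subset (s := cube ι a b)]
  · refine setLIntegral_congr_fun (measurableSet_cube a b) fun s hs => ?_
    simp [preimage_mk_diagNhd d hs, Real.volume_Icc_pi]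
  · refine Function.support_subset_iff'.2 fun s hs => ?_
    have : Prod.mk s ⁻¹' diagNhd a b d = ∅ :=
      eq_empty_of_forall_notMem fun t ht => hs (mem_prod.1 ht.1).1
    simp [this]

theorem ofReal_le_volume_diagNhd [Fintype ι] {a b : ℝ} (hab : a ≤ b) {d : ι → ℝ}
    (hd : ∀ j, 0 ≤ d j) (hdab : ∀ j, d j ≤ b - a) :
    ENNReal.ofReal ((b - a) ^ Fintype.card ι * ∏ j, d j) ≤ volume (diagNhd a b d) := by
  rw [volume_diagNhd, ENNReal.ofReal_mul (pow_nonneg (sub_nonneg.2 hab) _), ← volume_cube hab,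
    mul_comm, ← setLIntegral_const, ENNReal.ofReal_prod_of_nonneg fun j _ => hd j]
  exact setLIntegral_mono' (measurableSet_cube a b) fun s hs => Finset.prod_le_prod' fun j _ =>
    ENNReal.ofReal_le_ofReal (le_min_add_sub_max_sub (hs j trivial) (hd j) (hdab j))

theorem volume_diagNhd_le [Fintype ι] {a b : ℝ} (hab : a ≤ b) {d : ι → ℝ} (hd : ∀ j, 0 ≤ d j) :
    volume (diagNhd a b d) ≤ ENNReal.ofReal ((b - a) ^ Fintype.card ι * ∏ j, 2 * d j) := by
  rw [volume_diagNhd, ENNReal.ofReal_mul (pow_nonneg (sub_nonneg.2 hab) _), ← volume_cube hab,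
    mul_comm, ← setLIntegral_const, ENNReal.ofReal_prod_of_nonneg fun j _ => by linarith [hd j]]
  exact setLIntegral_mono' (measurableSet_cube a b) fun s _ => Finset.prod_le_prod' fun j _ =>
    ENNReal.ofReal_le_ofReal (min_add_sub_max_sub_le a b (s j) (d j))

end Cube

section Anisotropic

variable {ι : Type*} [Fintype ι] {H : ι → ℝ} {a b r : ℝ}

def anisoDiagNhd (a b : ℝ) (H : ι → ℝ) (r : ℝ) : Set ((ι → ℝ) × (ι → ℝ)) :=
  diagNhd a b fun j => r ^ (H j)⁻¹

theorem sum_abs_sub_rpow_le_of_mem_anisoDiagNhd (hH : ∀ j, 0 < H j) (hr : 0 ≤ r)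
    {p : (ι → ℝ) × (ι → ℝ)} (hp : p ∈ anisoDiagNhd a b H r) :
    ∑ j, |p.1 j - p.2 j| ^ H j ≤ Fintype.card ι * r :=
  calc ∑ j, |p.1 j - p.2 j| ^ H j ≤ ∑ _j : ι, r := Finset.sum_le_sum fun j _ => by
        simpa only [Real.rpow_inv_rpow hr (hH j).ne'] using
          Real.rpow_le_rpow (abs_nonneg _) (hp.2 j) (hH j).le
    _ = Fintype.card ι * r := by simp

theorem ofReal_le_volume_anisoDiagNhd (hH : ∀ j, H j ∈ Ioc 0 1) (hab : a ≤ b) (hr0 : 0 < r)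
    (hr1 : r ≤ 1) (hrab : r ≤ b - a) :
    ENNReal.ofReal ((b - a) ^ Fintype.card ι * r ^ ∑ j, (H j)⁻¹) ≤
      volume (anisoDiagNhd a b H r) := by
  rw [Real.rpow_sum_of_pos hr0]
  refine ofReal_le_volume_diagNhd hab (fun j => (Real.rpow_pos_of_pos hr0 _).le) fun j => ?_
  exact (Real.rpow_le_self_of_le_one hr0.le hr1 ((one_le_inv₀ (hH j).1).2 (hH j).2)).trans hrab

theorem volume_anisoDiagNhd_le (hab : a ≤ b) (hr0 : 0 < r) :
    volume (anisoDiagNhd a b H r) ≤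
      ENNReal.ofReal ((b - a) ^ Fintype.card ι * (2 ^ Fintype.card ι * r ^ ∑ j, (H j)⁻¹)) := by
  rw [Real.rpow_sum_of_pos hr0]
  refine (volume_diagNhd_le hab fun j => (Real.rpow_pos_of_pos hr0 _).le).trans_eq ?_
  rw [Finset.prod_mul_distrib, Finset.prod_const, Finset.card_univ]

theorem ofReal_le_volume_anisoDiagNhd_diff (hH : ∀ j, H j ∈ Ioc 0 1) (hab : a ≤ b)
    (hr0 : 0 < r) (hr1 : r ≤ 1) (hrab : r ≤ b - a) :
    ENNReal.ofReal ((b - a) ^ Fintype.card ι *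
        (1 - 2 ^ ((Fintype.card ι : ℝ) - ∑ j, (H j)⁻¹)) * r ^ ∑ j, (H j)⁻¹) ≤
      volume (anisoDiagNhd a b H r \ anisoDiagNhd a b H (r / 2)) := by
  refine le_trans ?_ (le_measure_sdiff (μ := volume))
  refine le_trans ?_ (tsub_le_tsub (ofReal_le_volume_anisoDiagNhd hH hab hr0 hr1 hrab)
    (volume_anisoDiagNhd_le hab (half_pos hr0)))
  rw [← ENNReal.ofReal_sub _ (by positivity)]
  refine ENNReal.ofReal_le_ofReal (le_of_eq ?_)
  rw [Real.div_rpow hr0.le zero_le_two, Real.rpow_sub two_pos, Real.rpow_natCast]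
  field_simp

theorem ofReal_le_setLIntegral_anisoDiagNhd_diff [Nonempty ι] {γ : ℝ}
    (hH : ∀ j, H j ∈ Ioc 0 1) (hγ : ∑ j, (H j)⁻¹ ≤ γ) (hab : a ≤ b) (hr0 : 0 < r)
    (hr1 : r ≤ 1) (hrab : r ≤ b - a) :
    ENNReal.ofReal ((b - a) ^ Fintype.card ι *
        (1 - 2 ^ ((Fintype.card ι : ℝ) - ∑ j, (H j)⁻¹)) / Fintype.card ι ^ γ) ≤
      ∫⁻ p in anisoDiagNhd a b H r \ anisoDiagNhd a b H (r / 2),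
        (ENNReal.ofReal ((∑ j, |p.1 j - p.2 j| ^ H j) ^ γ))⁻¹ := by
  set σ := ∑ j, (H j)⁻¹
  set n := Fintype.card ι
  have hnσ : (n : ℝ) ≤ σ := by
    simpa [n] using Finset.sum_le_sum fun j (_ : j ∈ Finset.univ) =>
      (one_le_inv₀ (hH j).1).2 (hH j).2
  have hγ0 : 0 ≤ γ := (Nat.cast_nonneg _).trans (hnσ.trans hγ)
  have hn : (0 : ℝ) < n := Nat.cast_pos.2 Fintype.card_pos
  have hnr : 0 < ((n : ℝ) * r) ^ γ := by positivity
  set c := (b - a) ^ n * (1 - 2 ^ ((n : ℝ) - σ))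
  have hc : 0 ≤ c := mul_nonneg (pow_nonneg (sub_nonneg.2 hab) _)
    (sub_nonneg.2 (Real.rpow_le_one_of_one_le_of_nonpos one_le_two (sub_nonpos.2 hnσ)))
  have hrγσ : r ^ γ ≤ r ^ σ := Real.rpow_le_rpow_of_exponent_ge hr0 hr1 hγ
  calc ENNReal.ofReal (c / n ^ γ)
      ≤ ENNReal.ofReal (c * r ^ σ / ((n : ℝ) * r) ^ γ) := by
        refine ENNReal.ofReal_le_ofReal ?_
        rw [Real.mul_rpow hn.le hr0.le, div_le_div_iff₀ (by positivity) (by positivity)]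
        nlinarith [mul_le_mul_of_nonneg_left hrγσ (mul_nonneg hc (Real.rpow_nonneg hn.le γ))]
    _ = ENNReal.ofReal (c * r ^ σ) * (ENNReal.ofReal (((n : ℝ) * r) ^ γ))⁻¹ := by
        rw [ENNReal.ofReal_div_of_pos hnr, div_eq_mul_inv]
    _ ≤ volume (anisoDiagNhd a b H r \ anisoDiagNhd a b H (r / 2)) *
          (ENNReal.ofReal (((n : ℝ) * r) ^ γ))⁻¹ :=
        mul_le_mul_left (ofReal_le_volume_anisoDiagNhd_diff hH hab hr0 hr1 hrab) _
    _ ≤ _ := by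
        rw [mul_comm, ← setLIntegral_const]
        refine setLIntegral_mono'
          ((measurableSet_diagNhd _ _ _).diff (measurableSet_diagNhd _ _ _)) fun p hp => ?_
        refine ENNReal.inv_le_inv.2 (ENNReal.ofReal_le_ofReal (Real.rpow_le_rpow
          (Finset.sum_nonneg fun j _ => by positivity) ?_ hγ0))
        exact sum_abs_sub_rpow_le_of_mem_anisoDiagNhd (fun j => (hH j).1) hr0.le hp.1

theorem lintegral_inv_sum_abs_sub_rpow_eq_top [Nonempty ι] {γ : ℝ} (hH : ∀ j, H j ∈ Ioo 0 1)
    (hγ : ∑ j, (H j)⁻¹ ≤ γ) (hab : a < b) :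
    ∫⁻ p in cube ι a b ×ˢ cube ι a b,
      (ENNReal.ofReal ((∑ j, |p.1 j - p.2 j| ^ H j) ^ γ))⁻¹ = ⊤ := by
  set σ := ∑ j, (H j)⁻¹
  set n := Fintype.card ι
  have hnσ : (n : ℝ) < σ := by
    simpa using Finset.sum_lt_sum_of_nonempty Finset.univ_nonempty fun j _ =>
      (one_lt_inv₀ (hH j).1).2 (hH j).2
  have hmin : 0 < min 1 (b - a) := lt_min one_pos (sub_pos.2 hab)
  set r : ℕ → ℝ := fun k => min 1 (b - a) / 2 ^ k
  have hr0 : ∀ k, 0 < r k := fun k => by positivity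
  have hr_le : ∀ k, r k ≤ min 1 (b - a) := fun k => div_le_self hmin.le (one_le_pow₀ one_le_two)
  have hr_succ : ∀ k, r (k + 1) = r k / 2 := fun k => by simp only [r, pow_succ, div_div]
  have hc : 0 < (b - a) ^ n * (1 - 2 ^ ((n : ℝ) - σ)) / n ^ γ := by
    have : 0 < 1 - (2 : ℝ) ^ ((n : ℝ) - σ) :=
      sub_pos.2 (Real.rpow_lt_one_of_one_lt_of_neg one_lt_two (sub_neg.2 hnσ))
    have : (0 : ℝ) < n := Nat.cast_pos.2 Fintype.card_pos
    have : 0 < b - a := sub_pos.2 hab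
    positivity
  refine setLIntegral_eq_top_of_antitone (E := fun k => anisoDiagNhd a b H (r k))
    (antitone_nat_of_succ_le fun k => diagNhd_mono fun j => ?_)
    (fun k => measurableSet_diagNhd _ _ _) inter_subset_left (ENNReal.ofReal_pos.2 hc).ne'
    fun k => ?_
  · rw [hr_succ]
    exact Real.rpow_le_rpow (half_pos (hr0 k)).le (half_le_self (hr0 k).le)
      (inv_nonneg.2 (hH j).1.le)
  · rw [hr_succ]
    exact ofReal_le_setLIntegral_anisoDiagNhd_diff (fun j => Ioo_subset_Ioc_self (hH j)) hγ
      hab.le (hr0 k) ((hr_le k).trans (min_le_left _ _)) ((hr_le k).trans (min_le_right _ _))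

end Anisotropic

theorem stmt9_general (N : ℕ) (hN : 1 ≤ N) (H : Fin N → ℝ)
    (hH : ∀ j, H j ∈ Set.Ioo (0:ℝ) 1) (γ : ℝ)
    (hcond : ∑ j, 1 / H j ≤ γ) (a b : ℝ) (hab : a < b) :
    (∫⁻ p in ((Set.univ.pi fun _ : Fin N => Set.Icc a b) ×ˢ
        (Set.univ.pi fun _ : Fin N => Set.Icc a b)),
        (ENNReal.ofReal ((∑ j, |p.1 j - p.2 j| ^ H j) ^ γ))⁻¹) = ⊤ := by
  have : Nonempty (Fin N) := ⟨⟨0, hN⟩⟩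
  simp only [one_div] at hcond
  exact lintegral_inv_sum_abs_sub_rpow_eq_top hH hcond hab

theorem stmt9 (N : ℕ) (hN : 1 ≤ N) (H : Fin N → ℝ)
    (hH : ∀ j, H j ∈ Set.Ioo (0:ℝ) 1) (γ : ℝ) (hγ : 0 < γ)
    (hcond : ∑ j, 1 / H j ≤ γ) (a b : ℝ) (ha : 0 ≤ a) (hab : a < b) (hb : b ≤ 1) :
    (∫⁻ p in ((Set.univ.pi fun _ : Fin N => Set.Icc a b) ×ˢ
        (Set.univ.pi fun _ : Fin N => Set.Icc a b)),
        (ENNReal.ofReal ((∑ j, |p.1 j - p.2 j| ^ H j) ^ γ))⁻¹) = ⊤ :=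
  stmt9_general N hN H hH γ hcond a b hab
end

section
/- Let N ≥ 1 be an integer, H = (H₁, …, H_N) ∈ (0,1)^N, K = (K₁, …, K_N) ∈ (0,1)^N, and I = [0,1]^N. Let R₁, R₂ : I × I → ℝ be symmetric positive semidefinite kernels such that there exist constants c, c' > 0 with inf_{a ∈ ℝ} ( R₁(t,t) − 2a·R₁(s,t) + a²·R₁(s,s) ) ≥ c ∑_{j=1}^N min{|s_j − t_j|^{2H_j}, t_j^{2H_j}} and inf_{a ∈ ℝ} ( R₂(t,t) − 2a·R₂(s,t) + a²·R₂(s,s) ) ≥ c' ∑_{j=1}^N min{|s_j − t_j|^{2K_j}, t_j^{2K_j}} for all s, t ∈ I. Then there exists a constant c'' > 0 such that the kernel R = R₁ + R₂ satisfies inf_{a ∈ ℝ} ( R(t,t) − 2a·R(s,t) + a²·R(s,s) ) ≥ c'' ∑_{j=1}^N min{|s_j − t_j|^{2(H_j ∧ K_j)}, t_j^{2(H_j ∧ K_j)}} for all s, t ∈ I, where H_j ∧ K_j = min{H_j, K_j}. -/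
/-!
Summing two kernels can only increase the residual variance `inf_a (R t t - 2 a R s t + a² R s s)`:
for each `a` the quadratic form of `R₁ + R₂` is the sum of those of `R₁` and `R₂`, both nonnegative
by positive semidefiniteness, so the infimum of the sum dominates the sum of the infima. On the
other side, the `j`-th term of the gauge with exponent `H j ∧ K j` is one of the two nonnegative
terms with exponents `H j` and `K j`, hence at most their sum; `c'' = min c c'` then works.
-/

open MeasureTheory Set

/-- For a centred Gaussian field with covariance `R` this is `Var (X t | X s)`. -/
noncomputable def residualVariance {α : Type*} (R : α → α → ℝ) (s t : α) : ℝ :=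
  ⨅ a : ℝ, (R t t - 2 * a * R s t + a ^ 2 * R s s)

noncomputable def anisotropicGauge {ι : Type*} [Fintype ι] (H s t : ι → ℝ) : ℝ :=
  ∑ j, min (|s j - t j| ^ (2 * H j)) (t j ^ (2 * H j))

section Kernel

variable {α : Type*} {S : Set α} {R R₁ R₂ : α → α → ℝ} {s t : α}

theorem residualForm_nonneg
    (hpsd : ∀ (n : ℕ) (x : Fin n → α), (∀ i, x i ∈ S) →
      ∀ a : Fin n → ℝ, 0 ≤ ∑ i, ∑ k, a i * a k * R (x i) (x k))
    (hs : s ∈ S) (ht : t ∈ S) (hst : R s t = R t s) (a : ℝ) :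
    0 ≤ R t t - 2 * a * R s t + a ^ 2 * R s s := by
  have h := hpsd 2 ![t, s] (Fin.forall_fin_two.2 ⟨ht, hs⟩) ![1, -a]
  simp only [Fin.sum_univ_two, Matrix.cons_val_zero, Matrix.cons_val_one] at h
  rw [hst] at h ⊢
  linear_combination h

theorem residualVariance_add_le
    (hpsd₁ : ∀ (n : ℕ) (x : Fin n → α), (∀ i, x i ∈ S) →
      ∀ a : Fin n → ℝ, 0 ≤ ∑ i, ∑ k, a i * a k * R₁ (x i) (x k))
    (hpsd₂ : ∀ (n : ℕ) (x : Fin n → α), (∀ i, x i ∈ S) →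
      ∀ a : Fin n → ℝ, 0 ≤ ∑ i, ∑ k, a i * a k * R₂ (x i) (x k))
    (hs : s ∈ S) (ht : t ∈ S) (hst₁ : R₁ s t = R₁ t s) (hst₂ : R₂ s t = R₂ t s) :
    residualVariance R₁ s t + residualVariance R₂ s t ≤ residualVariance (R₁ + R₂) s t := by
  have hbdd₁ : BddBelow (range fun a : ℝ => R₁ t t - 2 * a * R₁ s t + a ^ 2 * R₁ s s) :=
    ⟨0, forall_mem_range.2 (residualForm_nonneg hpsd₁ hs ht hst₁)⟩
  have hbdd₂ : BddBelow (range fun a : ℝ => R₂ t t - 2 * a * R₂ s t + a ^ 2 * R₂ s s) :=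
    ⟨0, forall_mem_range.2 (residualForm_nonneg hpsd₂ hs ht hst₂)⟩
  refine (ciInf_add_ciInf_le_ciInf_add hbdd₁ hbdd₂).trans_eq ?_
  simp only [residualVariance, Pi.add_apply]
  congr 1 with a
  ring

end Kernel

theorem apply_min_le_add {α β : Type*} [LinearOrder α] [AddZeroClass β] [Preorder β]
    [AddLeftMono β] [AddRightMono β] {f : α → β} {x y : α} (hx : 0 ≤ f x) (hy : 0 ≤ f y) :
    f (min x y) ≤ f x + f y := by
  rcases min_choice x y with h | h <;> rw [h]
  · exact le_add_of_nonneg_right hy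
  · exact le_add_of_nonneg_left hx

section Gauge

variable {ι : Type*} [Fintype ι] {s t : ι → ℝ}

theorem anisotropicGauge_nonneg (H : ι → ℝ) (ht : 0 ≤ t) : 0 ≤ anisotropicGauge H s t :=
  Finset.sum_nonneg fun j _ =>
    le_min (Real.rpow_nonneg (abs_nonneg _) _) (Real.rpow_nonneg (ht j) _)

theorem anisotropicGauge_min_le_add (H K : ι → ℝ) (ht : 0 ≤ t) :
    anisotropicGauge (fun j => min (H j) (K j)) s t ≤
      anisotropicGauge H s t + anisotropicGauge K s t := by
  rw [anisotropicGauge, anisotropicGauge, anisotropicGauge, ← Finset.sum_add_distrib]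
  refine Finset.sum_le_sum fun j _ =>
    apply_min_le_add (f := fun h => min (|s j - t j| ^ (2 * h)) (t j ^ (2 * h))) ?_ ?_ <;>
  exact le_min (Real.rpow_nonneg (abs_nonneg _) _) (Real.rpow_nonneg (ht j) _)

end Gauge

theorem stmt14_general (N : ℕ) (H K : Fin N → ℝ)
    (I : Set (Fin N → ℝ)) (hIdef : I = Set.univ.pi fun _ => Set.Icc (0:ℝ) 1)
    (R₁ R₂ : (Fin N → ℝ) → (Fin N → ℝ) → ℝ)
    (hsymm₁ : ∀ s ∈ I, ∀ t ∈ I, R₁ s t = R₁ t s)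
    (hsymm₂ : ∀ s ∈ I, ∀ t ∈ I, R₂ s t = R₂ t s)
    (hpsd₁ : ∀ (n : ℕ) (t : Fin n → (Fin N → ℝ)), (∀ i, t i ∈ I) →
      ∀ a : Fin n → ℝ, 0 ≤ ∑ i, ∑ k, a i * a k * R₁ (t i) (t k))
    (hpsd₂ : ∀ (n : ℕ) (t : Fin n → (Fin N → ℝ)), (∀ i, t i ∈ I) →
      ∀ a : Fin n → ℝ, 0 ≤ ∑ i, ∑ k, a i * a k * R₂ (t i) (t k))
    (c c' : ℝ) (hc : 0 < c) (hc' : 0 < c')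
    (hC2₁ : ∀ s ∈ I, ∀ t ∈ I,
      c * ∑ j, min (|s j - t j| ^ (2 * H j)) (t j ^ (2 * H j)) ≤
        ⨅ a : ℝ, (R₁ t t - 2 * a * R₁ s t + a ^ 2 * R₁ s s))
    (hC2₂ : ∀ s ∈ I, ∀ t ∈ I,
      c' * ∑ j, min (|s j - t j| ^ (2 * K j)) (t j ^ (2 * K j)) ≤
        ⨅ a : ℝ, (R₂ t t - 2 * a * R₂ s t + a ^ 2 * R₂ s s)) :
    ∃ c'' : ℝ, 0 < c'' ∧ ∀ s ∈ I, ∀ t ∈ I,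
      c'' * ∑ j, min (|s j - t j| ^ (2 * min (H j) (K j)))
          (t j ^ (2 * min (H j) (K j))) ≤
        ⨅ a : ℝ, ((R₁ t t + R₂ t t) - 2 * a * (R₁ s t + R₂ s t) +
          a ^ 2 * (R₁ s s + R₂ s s)) := by
  refine ⟨min c c', lt_min hc hc', fun s hs t ht => ?_⟩
  have ht₀ : 0 ≤ t := fun j => ((hIdef ▸ ht : t ∈ Set.univ.pi _) j trivial).1
  have hgH := anisotropicGauge_nonneg (s := s) H ht₀
  have hgK := anisotropicGauge_nonneg (s := s) K ht₀
  change min c c' * anisotropicGauge (fun j => min (H j) (K j)) s t ≤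
    residualVariance (R₁ + R₂) s t
  calc min c c' * anisotropicGauge (fun j => min (H j) (K j)) s t
      ≤ min c c' * (anisotropicGauge H s t + anisotropicGauge K s t) :=
        mul_le_mul_of_nonneg_left (anisotropicGauge_min_le_add H K ht₀) (le_min hc.le hc'.le)
    _ ≤ c * anisotropicGauge H s t + c' * anisotropicGauge K s t := by
        rw [mul_add]
        gcongr
        exacts [min_le_left _ _, min_le_right _ _]
    _ ≤ residualVariance R₁ s t + residualVariance R₂ s t :=
        add_le_add (hC2₁ s hs t ht) (hC2₂ s hs t ht)
    _ ≤ residualVariance (R₁ + R₂) s t :=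
        residualVariance_add_le hpsd₁ hpsd₂ hs ht (hsymm₁ s hs t ht) (hsymm₂ s hs t ht)

theorem stmt14 (N : ℕ) (hN : 1 ≤ N) (H K : Fin N → ℝ)
    (hH : ∀ j, H j ∈ Set.Ioo (0:ℝ) 1) (hK : ∀ j, K j ∈ Set.Ioo (0:ℝ) 1)
    (I : Set (Fin N → ℝ)) (hIdef : I = Set.univ.pi fun _ => Set.Icc (0:ℝ) 1)
    (R₁ R₂ : (Fin N → ℝ) → (Fin N → ℝ) → ℝ)
    (hsymm₁ : ∀ s ∈ I, ∀ t ∈ I, R₁ s t = R₁ t s)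
    (hsymm₂ : ∀ s ∈ I, ∀ t ∈ I, R₂ s t = R₂ t s)
    (hpsd₁ : ∀ (n : ℕ) (t : Fin n → (Fin N → ℝ)), (∀ i, t i ∈ I) →
      ∀ a : Fin n → ℝ, 0 ≤ ∑ i, ∑ k, a i * a k * R₁ (t i) (t k))
    (hpsd₂ : ∀ (n : ℕ) (t : Fin n → (Fin N → ℝ)), (∀ i, t i ∈ I) →
      ∀ a : Fin n → ℝ, 0 ≤ ∑ i, ∑ k, a i * a k * R₂ (t i) (t k))
    (c c' : ℝ) (hc : 0 < c) (hc' : 0 < c')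
    (hC2₁ : ∀ s ∈ I, ∀ t ∈ I,
      c * ∑ j, min (|s j - t j| ^ (2 * H j)) (t j ^ (2 * H j)) ≤
        ⨅ a : ℝ, (R₁ t t - 2 * a * R₁ s t + a ^ 2 * R₁ s s))
    (hC2₂ : ∀ s ∈ I, ∀ t ∈ I,
      c' * ∑ j, min (|s j - t j| ^ (2 * K j)) (t j ^ (2 * K j)) ≤
        ⨅ a : ℝ, (R₂ t t - 2 * a * R₂ s t + a ^ 2 * R₂ s s)) :
    ∃ c'' : ℝ, 0 < c'' ∧ ∀ s ∈ I, ∀ t ∈ I,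
      c'' * ∑ j, min (|s j - t j| ^ (2 * min (H j) (K j)))
          (t j ^ (2 * min (H j) (K j))) ≤
        ⨅ a : ℝ, ((R₁ t t + R₂ t t) - 2 * a * (R₁ s t + R₂ s t) +
          a ^ 2 * (R₁ s s + R₂ s s)) :=
  stmt14_general N H K I hIdef R₁ R₂ hsymm₁ hsymm₂ hpsd₁ hpsd₂ c c' hc hc' hC2₁ hC2₂
end

section
/- Let N ≥ 1 be an integer, H = (H₁, …, H_N) ∈ (0,1)^N. Let R : [0,1]^N × [0,1]^N → ℝ be a symmetric positive semidefinite kernel satisfying (C3): there is a constant c₀ > 0 such that for all u, t¹, t², t³ ∈ [0,1]^N, inf_{(a₁,a₂,a₃) ∈ ℝ³} ( R(u,u) − 2∑_{i=1}^3 a_i R(u, tⁱ) + ∑_{i,k=1}^3 a_i a_k R(tⁱ, tᵏ) ) ≥ c₀ ∑_{j=1}^N min{ u_j^{2H_j}, |u_j − t¹_j|^{2H_j}, |u_j − t²_j|^{2H_j}, |u_j − t³_j|^{2H_j} }. Let I, J ⊆ [0,1]^N be compact rectangles and ε₀ > 0 such that |s_j − t_j| ≥ ε₀ for every j = 1, …,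 N, every s ∈ I and every t ∈ J (I and J are well separated). Define Q((s,t),(s',t')) = R(s,s') − R(s,t') − R(t,s') + R(t,t'). Then there exists a constant c > 0 such that for all (s,t), (s',t') ∈ I × J: inf_{a ∈ ℝ} ( Q((s,t),(s,t)) − 2a·Q((s,t),(s',t')) + a²·Q((s',t'),(s',t')) ) ≥ c · ( ∑_{j=1}^N min{|s_j − s'_j|^{2H_j}, s_j^{2H_j}} + ∑_{j=1}^N min{|t_j − t'_j|^{2H_j}, t_j^{2H_j}} ). -/
/-!
`Q(a) = Q((s,t),(s,t)) - 2a Q((s,t),(s',t')) + a² Q((s',t'),(s',t'))` is the variance of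
`X(s) - X(t) - a (X(s') - X(t'))`. Read as `X(s) - (X(t) + a X(s') - a X(t'))` it is at least the
conditional variance of `X(s)` given `X(t), X(s'), X(t')`; read as `X(t) - (X(s) + a X(t') - a X(s'))`
it is at least that of `X(t)` given `X(s), X(t'), X(s')`. Condition (C3) bounds both from below by
`c₀ ∑ⱼ` of a minimum of four terms. In the first, the terms `|s_j - t_j|^{2H_j}` and
`|s_j - t'_j|^{2H_j}` are at least `(min ε₀ 1)²` by separation, while `s_j^{2H_j} ≤ 1`, so the
minimum dominates `(min ε₀ 1)² min{|s_j - s'_j|^{2H_j}, s_j^{2H_j}}`; symmetrically for `t`.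
Averaging the two bounds gives the constant `c₀ (min ε₀ 1)² / 2`.
-/

open MeasureTheory Set

section Kernel

variable {α : Type*} (R : α → α → ℝ)

/-- `‖X(u) - (b₀ X(t₁) + b₁ X(t₂) + b₂ X(t₃))‖²` for a field `X` with covariance `R`; its infimum
over `b` is the conditional variance in condition (C3). -/
def residualSq (u t₁ t₂ t₃ : α) (b : Fin 3 → ℝ) : ℝ :=
  R u u - 2 * (b 0 * R u t₁ + b 1 * R u t₂ + b 2 * R u t₃) +
    (b 0 * b 0 * R t₁ t₁ + b 0 * b 1 * R t₁ t₂ + b 0 * b 2 * R t₁ t₃ +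
     b 1 * b 0 * R t₂ t₁ + b 1 * b 1 * R t₂ t₂ + b 1 * b 2 * R t₂ t₃ +
     b 2 * b 0 * R t₃ t₁ + b 2 * b 1 * R t₃ t₂ + b 2 * b 2 * R t₃ t₃)

/-- The covariance `Q((s,t),(s',t'))` of the increments `X(s) - X(t)` and `X(s') - X(t')`. -/
def incrementCov (s t s' t' : α) : ℝ :=
  R s s' - R s t' - R t s' + R t t'

/-- `‖(X(s) - X(t)) - a (X(s') - X(t'))‖²`. -/
def incrementQuad (s t s' t' : α) (a : ℝ) : ℝ :=
  incrementCov R s t s t - 2 * a * incrementCov R s t s' t' + a ^ 2 * incrementCov R s' t' s' t'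

variable {R}

lemma incrementQuad_swap (s t s' t' : α) (a : ℝ) :
    incrementQuad R t s t' s' a = incrementQuad R s t s' t' a := by
  unfold incrementQuad incrementCov
  ring

lemma residualSq_one_neg (hsymm : ∀ x y, R x y = R y x) (u t₁ t₂ t₃ : α) (a : ℝ) :
    residualSq R u t₁ t₂ t₃ ![1, a, -a] = incrementQuad R u t₁ t₂ t₃ a := by
  simp only [residualSq, incrementQuad, incrementCov, Matrix.cons_val_zero, Matrix.cons_val_one,
    Matrix.cons_val_two, Matrix.head_cons, Matrix.tail_cons]
  rw [hsymm t₁ u, hsymm t₂ t₁, hsymm t₃ t₁, hsymm t₃ t₂]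
  ring

lemma residualSq_nonneg (hsymm : ∀ x y, R x y = R y x)
    (hpsd : ∀ (n : ℕ) (t : Fin n → α) (a : Fin n → ℝ), 0 ≤ ∑ i, ∑ k, a i * a k * R (t i) (t k))
    (u t₁ t₂ t₃ : α) (b : Fin 3 → ℝ) : 0 ≤ residualSq R u t₁ t₂ t₃ b := by
  refine (hpsd 4 ![u, t₁, t₂, t₃] ![1, -b 0, -b 1, -b 2]).trans_eq ?_
  simp only [residualSq, Fin.sum_univ_four, Matrix.cons_val_zero, Matrix.cons_val_one,
    Matrix.cons_val_two, Matrix.cons_val_three, Matrix.head_cons, Matrix.tail_cons]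
  rw [hsymm t₁ u, hsymm t₂ u, hsymm t₃ u, hsymm t₂ t₁, hsymm t₃ t₁, hsymm t₃ t₂]
  ring

lemma le_incrementQuad_of_le_iInf_residualSq (hsymm : ∀ x y, R x y = R y x)
    (hpsd : ∀ (n : ℕ) (t : Fin n → α) (a : Fin n → ℝ), 0 ≤ ∑ i, ∑ k, a i * a k * R (t i) (t k))
    {m : ℝ} {u v x y : α} (h : m ≤ ⨅ b, residualSq R u v x y b) (a : ℝ) :
    m ≤ incrementQuad R u v x y a := by
  have hbdd : BddBelow (Set.range (residualSq R u v x y)) :=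
    ⟨0, by rintro _ ⟨b, rfl⟩; exact residualSq_nonneg hsymm hpsd u v x y b⟩
  calc m ≤ residualSq R u v x y ![1, a, -a] := h.trans (ciInf_le hbdd _)
    _ = incrementQuad R u v x y a := residualSq_one_neg hsymm u v x y a

end Kernel

lemma mul_min_le_min_min_min {E A B C D : ℝ} (hE0 : 0 ≤ E) (hE1 : E ≤ 1) (hA0 : 0 ≤ A)
    (hA1 : A ≤ 1) (hC0 : 0 ≤ C) (hB : E ≤ B) (hD : E ≤ D) :
    E * min C A ≤ min A (min B (min C D)) := by
  have hm0 : 0 ≤ min C A := le_min hC0 hA0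
  have hm1 : min C A ≤ 1 := (min_le_right _ _).trans hA1
  refine le_min ?_ (le_min ?_ (le_min ?_ ?_))
  · exact (mul_le_of_le_one_left hm0 hE1).trans (min_le_right _ _)
  · exact (mul_le_of_le_one_right hE0 hm1).trans hB
  · exact (mul_le_of_le_one_left hm0 hE1).trans (min_le_left _ _)
  · exact (mul_le_of_le_one_right hE0 hm1).trans hD

lemma sq_min_one_le_rpow {ε x p : ℝ} (hε : 0 < ε) (hx : ε ≤ x) (hp0 : 0 < p) (hp2 : p ≤ 2) :
    min ε 1 ^ 2 ≤ x ^ p := by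
  have he0 : 0 < min ε 1 := lt_min hε one_pos
  calc min ε 1 ^ 2 = min ε 1 ^ (2 : ℝ) := (Real.rpow_natCast _ 2).symm
    _ ≤ min ε 1 ^ p := Real.rpow_le_rpow_of_exponent_ge he0 (min_le_right _ _) hp2
    _ ≤ x ^ p := Real.rpow_le_rpow he0.le ((min_le_left _ _).trans hx) hp0.le

lemma sum_min_le_sum_min_of_separated {N : ℕ} {H : Fin N → ℝ} (hH : ∀ j, H j ∈ Ioc (0 : ℝ) 1)
    {ε : ℝ} (hε : 0 < ε) {u v x y : Fin N → ℝ} (hu : ∀ j, u j ∈ Icc (0 : ℝ) 1)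
    (hv : ∀ j, ε ≤ |u j - v j|) (hy : ∀ j, ε ≤ |u j - y j|) :
    min ε 1 ^ 2 * ∑ j, min (|u j - x j| ^ (2 * H j)) (u j ^ (2 * H j)) ≤
      ∑ j, min (u j ^ (2 * H j)) (min (|u j - v j| ^ (2 * H j))
        (min (|u j - x j| ^ (2 * H j)) (|u j - y j| ^ (2 * H j)))) := by
  rw [Finset.mul_sum]
  refine Finset.sum_le_sum fun j _ => ?_
  have hp0 : 0 < 2 * H j := by linarith [(hH j).1]
  have hp2 : 2 * H j ≤ 2 := by linarith [(hH j).2]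
  have hE1 : min ε 1 ^ 2 ≤ 1 := pow_le_one₀ (lt_min hε one_pos).le (min_le_right _ _)
  exact mul_min_le_min_min_min (by positivity) hE1 (Real.rpow_nonneg (hu j).1 _)
    (Real.rpow_le_one (hu j).1 (hu j).2 hp0.le) (Real.rpow_nonneg (abs_nonneg _) _)
    (sq_min_one_le_rpow hε (hv j) hp0 hp2) (sq_min_one_le_rpow hε (hy j) hp0 hp2)

theorem stmt15_general (N : ℕ) (H : Fin N → ℝ)
    (hH : ∀ j, H j ∈ Set.Ioo (0:ℝ) 1)
    (R : (Fin N → ℝ) → (Fin N → ℝ) → ℝ)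
    (hsymm : ∀ s t, R s t = R t s)
    (hpsd : ∀ (n : ℕ) (t : Fin n → (Fin N → ℝ)),
      ∀ a : Fin n → ℝ, 0 ≤ ∑ i, ∑ k, a i * a k * R (t i) (t k))
    (c₀ : ℝ) (hc₀ : 0 < c₀)
    (hC3 : ∀ u t1 t2 t3 : Fin N → ℝ,
      u ∈ (Set.univ.pi fun _ : Fin N => Set.Icc (0:ℝ) 1) →
      t1 ∈ (Set.univ.pi fun _ : Fin N => Set.Icc (0:ℝ) 1) →
      t2 ∈ (Set.univ.pi fun _ : Fin N => Set.Icc (0:ℝ) 1) →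
      t3 ∈ (Set.univ.pi fun _ : Fin N => Set.Icc (0:ℝ) 1) →
      c₀ * ∑ j, min (u j ^ (2 * H j))
          (min (|u j - t1 j| ^ (2 * H j))
            (min (|u j - t2 j| ^ (2 * H j)) (|u j - t3 j| ^ (2 * H j)))) ≤
        ⨅ a : Fin 3 → ℝ,
          (R u u - 2 * (a 0 * R u t1 + a 1 * R u t2 + a 2 * R u t3) +
            (a 0 * a 0 * R t1 t1 + a 0 * a 1 * R t1 t2 + a 0 * a 2 * R t1 t3 +
             a 1 * a 0 * R t2 t1 + a 1 * a 1 * R t2 t2 + a 1 * a 2 * R t2 t3 +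
             a 2 * a 0 * R t3 t1 + a 2 * a 1 * R t3 t2 + a 2 * a 2 * R t3 t3)))
    (I J : Set (Fin N → ℝ))
    (hIsub : I ⊆ Set.univ.pi fun _ : Fin N => Set.Icc (0:ℝ) 1)
    (hJsub : J ⊆ Set.univ.pi fun _ : Fin N => Set.Icc (0:ℝ) 1)
    (ε₀ : ℝ) (hε₀ : 0 < ε₀)
    (hsep : ∀ j : Fin N, ∀ s ∈ I, ∀ t ∈ J, ε₀ ≤ |s j - t j|) :
    ∃ c : ℝ, 0 < c ∧ ∀ s ∈ I, ∀ t ∈ J, ∀ s' ∈ I, ∀ t' ∈ J,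
      c * ((∑ j, min (|s j - s' j| ^ (2 * H j)) (s j ^ (2 * H j))) +
          (∑ j, min (|t j - t' j| ^ (2 * H j)) (t j ^ (2 * H j)))) ≤
        ⨅ a : ℝ,
          ((R s s - R s t - R t s + R t t) -
            2 * a * (R s s' - R s t' - R t s' + R t t') +
            a ^ 2 * (R s' s' - R s' t' - R t' s' + R t' t')) := by
  refine ⟨c₀ * min ε₀ 1 ^ 2 / 2, by positivity, fun s hs t ht s' hs' t' ht' => ?_⟩
  have hsep' : ∀ u ∈ J, ∀ v ∈ I, ∀ j, ε₀ ≤ |u j - v j| := fun u hu v hv j =>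
    abs_sub_comm (v j) (u j) ▸ hsep j v hv u hu
  have hH' : ∀ j, H j ∈ Ioc (0 : ℝ) 1 := fun j => Ioo_subset_Ioc_self (hH j)
  have hS := sum_min_le_sum_min_of_separated hH' hε₀ (x := s') (fun j => hIsub hs j trivial)
    (fun j => hsep j s hs t ht) (fun j => hsep j s hs t' ht')
  have hT := sum_min_le_sum_min_of_separated hH' hε₀ (x := t') (fun j => hJsub ht j trivial)
    (hsep' t ht s hs) (hsep' t ht s' hs')
  refine le_ciInf fun a => ?_
  have hQs := le_incrementQuad_of_le_iInf_residualSq hsymm hpsd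
    (hC3 s t s' t' (hIsub hs) (hJsub ht) (hIsub hs') (hJsub ht')) a
  have hQt := le_incrementQuad_of_le_iInf_residualSq hsymm hpsd
    (hC3 t s t' s' (hJsub ht) (hIsub hs) (hJsub ht') (hIsub hs')) a
  rw [incrementQuad_swap] at hQt
  change _ ≤ incrementQuad R s t s' t' a
  linarith [mul_le_mul_of_nonneg_left hS hc₀.le, mul_le_mul_of_nonneg_left hT hc₀.le]

theorem stmt15 (N : ℕ) (hN : 1 ≤ N) (H : Fin N → ℝ)
    (hH : ∀ j, H j ∈ Set.Ioo (0:ℝ) 1)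
    (R : (Fin N → ℝ) → (Fin N → ℝ) → ℝ)
    (hsymm : ∀ s t, R s t = R t s)
    (hpsd : ∀ (n : ℕ) (t : Fin n → (Fin N → ℝ)),
      ∀ a : Fin n → ℝ, 0 ≤ ∑ i, ∑ k, a i * a k * R (t i) (t k))
    (c₀ : ℝ) (hc₀ : 0 < c₀)
    (hC3 : ∀ u t1 t2 t3 : Fin N → ℝ,
      u ∈ (Set.univ.pi fun _ : Fin N => Set.Icc (0:ℝ) 1) →
      t1 ∈ (Set.univ.pi fun _ : Fin N => Set.Icc (0:ℝ) 1) →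
      t2 ∈ (Set.univ.pi fun _ : Fin N => Set.Icc (0:ℝ) 1) →
      t3 ∈ (Set.univ.pi fun _ : Fin N => Set.Icc (0:ℝ) 1) →
      c₀ * ∑ j, min (u j ^ (2 * H j))
          (min (|u j - t1 j| ^ (2 * H j))
            (min (|u j - t2 j| ^ (2 * H j)) (|u j - t3 j| ^ (2 * H j)))) ≤
        ⨅ a : Fin 3 → ℝ,
          (R u u - 2 * (a 0 * R u t1 + a 1 * R u t2 + a 2 * R u t3) +
            (a 0 * a 0 * R t1 t1 + a 0 * a 1 * R t1 t2 + a 0 * a 2 * R t1 t3 +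
             a 1 * a 0 * R t2 t1 + a 1 * a 1 * R t2 t2 + a 1 * a 2 * R t2 t3 +
             a 2 * a 0 * R t3 t1 + a 2 * a 1 * R t3 t2 + a 2 * a 2 * R t3 t3)))
    (aI bI aJ bJ : Fin N → ℝ)
    (I J : Set (Fin N → ℝ))
    (hIdef : I = Set.univ.pi fun j => Set.Icc (aI j) (bI j))
    (hJdef : J = Set.univ.pi fun j => Set.Icc (aJ j) (bJ j))
    (hIsub : I ⊆ Set.univ.pi fun _ : Fin N => Set.Icc (0:ℝ) 1)
    (hJsub : J ⊆ Set.univ.pi fun _ : Fin N => Set.Icc (0:ℝ) 1)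
    (ε₀ : ℝ) (hε₀ : 0 < ε₀)
    (hsep : ∀ j : Fin N, ∀ s ∈ I, ∀ t ∈ J, ε₀ ≤ |s j - t j|) :
    ∃ c : ℝ, 0 < c ∧ ∀ s ∈ I, ∀ t ∈ J, ∀ s' ∈ I, ∀ t' ∈ J,
      c * ((∑ j, min (|s j - s' j| ^ (2 * H j)) (s j ^ (2 * H j))) +
          (∑ j, min (|t j - t' j| ^ (2 * H j)) (t j ^ (2 * H j)))) ≤
        ⨅ a : ℝ,
          ((R s s - R s t - R t s + R t t) -
            2 * a * (R s s' - R s t' - R t s' + R t t') +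
            a ^ 2 * (R s' s' - R s' t' - R t' s' + R t' t')) :=
  stmt15_general N H hH R hsymm hpsd c₀ hc₀ hC3 I J hIsub hJsub ε₀ hε₀ hsep
end

section
/- Let N ≥ 1 be an integer, H = (H₁, …, H_N) ∈ (0,1)^N, S ⊆ {1, …, N} a subset with complement S^c, and γ > 0 a real number such that 2∑_{j∈S} 1/H_j + ∑_{j∈S^c} 1/H_j > γ. Then the Lebesgue integral over (s, t, s', t') ∈ ([0,1]^N)⁴ of [ ∑_{j∈S} ( min{|t_j − t'_j|^{H_j}, t_j^{H_j}} + min{|s_j − s'_j|^{H_j}, s_j^{H_j}} ) + ∑_{j∈S^c} min{ |s_j − t_j|^{H_j}, |s_j − s'_j|^{H_j}, |s_j − t'_j|^{H_j}, s_j^{H_j} } ]^{−γ} ds dt ds' dt' is finite. -/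
/-!
Put `δ = γ / (2 ∑_{j ∈ S} 1/H_j + ∑_{j ∉ S} 1/H_j) < 1`. Every coordinate summand `d_j` of the
integrand is bounded by the whole sum, and the exponents `e_j = 2/H_j` (on `S`) and `1/H_j`
(off `S`) add up to `γ / δ`, so the integrand is at most `∏_j d_j^{-e_j δ}`.
On `S`, `d_j = u^{H_j} + v^{H_j}` with `u = min(|t_j - t'_j|, t_j)`, `v = min(|s_j - s'_j|, s_j)`,
and `d_j^{-2δ/H_j} ≤ u^{-δ} v^{-δ}`; off `S`, `d_j^{-δ/H_j} = m^{-δ}` for the minimum `m` of the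
four distances. As the reciprocal of a minimum is at most the sum of the reciprocals, each factor
is dominated by products and sums of `|a - b|^{-δ}` and `a^{-δ}`, integrable on `[0,1]²` because
`δ < 1`. The coordinates `(s_j, t_j, s'_j, t'_j)` are independent under Lebesgue measure on the
cube, so the integral of the product is the product of these finite integrals.
-/

open MeasureTheory Set ProbabilityTheory
open scoped ENNReal

lemma min_rpow_of_nonneg {x y r : ℝ} (hx : 0 ≤ x) (hy : 0 ≤ y) (hr : 0 ≤ r) :
    min (x ^ r) (y ^ r) = min x y ^ r := by
  rcases le_total x y with hxy | hxy
  · rw [min_eq_left hxy, min_eq_left (Real.rpow_le_rpow hx hxy hr)]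
  · rw [min_eq_right hxy, min_eq_right (Real.rpow_le_rpow hy hxy hr)]

lemma rpow_mul_rpow_le_add_rpow {u v H δ : ℝ} (hu : 0 ≤ u) (hv : 0 ≤ v) (hH : 0 < H)
    (hδ : 0 ≤ δ) : u ^ δ * v ^ δ ≤ (u ^ H + v ^ H) ^ (2 / H * δ) := by
  have huH := Real.rpow_nonneg hu H
  have hvH := Real.rpow_nonneg hv H
  have hle : ∀ w, 0 ≤ w → w ^ H ≤ u ^ H + v ^ H → w ^ δ ≤ (u ^ H + v ^ H) ^ (δ / H) :=
    fun w hw hwH => by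
      calc w ^ δ = (w ^ H) ^ (δ / H) := by rw [← Real.rpow_mul hw, mul_div_cancel₀ _ hH.ne']
        _ ≤ _ := Real.rpow_le_rpow (Real.rpow_nonneg hw H) hwH (div_nonneg hδ hH.le)
  calc u ^ δ * v ^ δ ≤ (u ^ H + v ^ H) ^ (δ / H) * (u ^ H + v ^ H) ^ (δ / H) :=
        mul_le_mul (hle u hu (le_add_of_nonneg_right hvH)) (hle v hv (le_add_of_nonneg_left huH))
          (Real.rpow_nonneg hv δ) (Real.rpow_nonneg (add_nonneg huH hvH) _)
    _ = (u ^ H + v ^ H) ^ (2 / H * δ) := by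
        rw [← Real.rpow_add_of_nonneg (add_nonneg huH hvH) (by positivity) (by positivity)]
        ring_nf

lemma prod_rpow_le_sum_rpow {ι : Type*} (s : Finset ι) {x e : ι → ℝ}
    (hx : ∀ i ∈ s, 0 ≤ x i) (he : ∀ i ∈ s, 0 ≤ e i) :
    ∏ i ∈ s, x i ^ e i ≤ (∑ i ∈ s, x i) ^ ∑ i ∈ s, e i := by
  rw [Real.rpow_sum_of_nonneg (Finset.sum_nonneg hx) he]
  exact Finset.prod_le_prod (fun i hi => Real.rpow_nonneg (hx i hi) _) fun i hi =>
    Real.rpow_le_rpow (hx i hi) (Finset.single_le_sum hx hi) (he i hi)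

lemma inv_ofReal_sum_rpow_le_prod {ι : Type*} (s : Finset ι) {x e : ι → ℝ}
    (hx : ∀ i ∈ s, 0 ≤ x i) (he : ∀ i ∈ s, 0 ≤ e i) :
    (ENNReal.ofReal ((∑ i ∈ s, x i) ^ ∑ i ∈ s, e i))⁻¹ ≤
      ∏ i ∈ s, (ENNReal.ofReal (x i ^ e i))⁻¹ := by
  rw [← ENNReal.prod_inv_distrib fun _ _ _ _ _ => Or.inr ENNReal.ofReal_ne_top,
    ← ENNReal.ofReal_prod_of_nonneg fun i hi => Real.rpow_nonneg (hx i hi) _]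
  exact ENNReal.inv_le_inv' (ENNReal.ofReal_le_ofReal (prod_rpow_le_sum_rpow s hx he))

section Factorization

variable {ι α : Type*} [Fintype ι] [MeasurableSpace α]

lemma lintegral_mul_comp_pairs {β γ ε : Type*} [MeasurableSpace β] [MeasurableSpace γ]
    [MeasurableSpace ε] (μa : Measure α) (μb : Measure β) (μc : Measure γ) (μd : Measure ε)
    [SFinite μa] [SFinite μb] [SFinite μc] [SFinite μd] {f : α × γ → ℝ≥0∞}
    {g : β × ε → ℝ≥0∞} (hf : Measurable f) (hg : Measurable g) :
    ∫⁻ x, f (x.1, x.2.2.1) * g (x.2.1, x.2.2.2) ∂μa.prod (μb.prod (μc.prod μd)) =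
      (∫⁻ z, f z ∂μa.prod μc) * ∫⁻ z, g z ∂μb.prod μd := by
  have hpairs : MeasurePreserving (fun x : α × β × γ × ε => ((x.1, x.2.2.1), (x.2.1, x.2.2.2)))
      (μa.prod (μb.prod (μc.prod μd))) ((μa.prod μc).prod (μb.prod μd)) :=
    (measurePreserving_prodAssoc μa μc (μb.prod μd)).symm.comp <|
      ((MeasurePreserving.id μa).prod (measurePreserving_prodAssoc μc μb μd)).comp <|
        ((MeasurePreserving.id μa).prod
          (MeasurePreserving.prod Measure.measurePreserving_swap (MeasurePreserving.id μd))).comp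
          ((MeasurePreserving.id μa).prod (measurePreserving_prodAssoc μb μc μd).symm)
  exact (hpairs.lintegral_comp (f := fun z => f z.1 * g z.2) (by fun_prop)).trans
    (lintegral_prod_mul hf.aemeasurable hg.aemeasurable)

lemma lintegral_pi_prod_eq_prod (μ : Measure α) [IsProbabilityMeasure μ] {g : ι → α → ℝ≥0∞}
    (hg : ∀ i, Measurable (g i)) :
    ∫⁻ x, ∏ i, g i (x i) ∂Measure.pi (fun _ => μ) = ∏ i, ∫⁻ a, g i a ∂μ := by
  refine (lintegral_prod_eq_prod_lintegral_of_indepFun Finset.univ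
    (fun i (x : ι → α) => g i (x i)) (iIndepFun_pi fun i => (hg i).aemeasurable)
    fun i => (hg i).comp (measurable_pi_apply i)).trans ?_
  exact Finset.prod_congr rfl fun i _ => (measurePreserving_eval _ i).lintegral_comp (hg i)

lemma lintegral_prod_coords_eq_prod (μ : Measure α) [IsProbabilityMeasure μ]
    {g : ι → α × α × α × α → ℝ≥0∞} (hg : ∀ i, Measurable (g i)) :
    ∫⁻ p, ∏ i, g i (p.1 i, p.2.1 i, p.2.2.1 i, p.2.2.2 i)
        ∂(Measure.pi fun _ => μ).prod ((Measure.pi fun _ => μ).prod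
          ((Measure.pi fun _ => μ).prod (Measure.pi fun _ => μ))) =
      ∏ i, ∫⁻ x, g i x ∂μ.prod (μ.prod (μ.prod μ)) := by
  have h₁ := measurePreserving_arrowProdEquivProdArrow α α ι (fun _ => μ) (fun _ => μ)
  have h₂ := measurePreserving_arrowProdEquivProdArrow α (α × α) ι (fun _ => μ) (fun _ => μ.prod μ)
  have h₃ := measurePreserving_arrowProdEquivProdArrow α (α × α × α) ι (fun _ => μ)
    (fun _ => μ.prod (μ.prod μ))
  have hcoords := ((MeasurePreserving.id _).prod ((MeasurePreserving.id _).prod h₁)).comp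
    (((MeasurePreserving.id _).prod h₂).comp h₃)
  rw [← hcoords.lintegral_comp (Finset.measurable_prod _ fun i _ => by fun_prop)]
  exact lintegral_pi_prod_eq_prod _ hg

end Factorization

noncomputable def invAbsRpow (δ x : ℝ) : ℝ≥0∞ := (ENNReal.ofReal (|x| ^ δ))⁻¹

@[fun_prop]
lemma measurable_invAbsRpow (δ : ℝ) : Measurable (invAbsRpow δ) := by
  unfold invAbsRpow; fun_prop

lemma invAbsRpow_min_le (δ a : ℝ) {b : ℝ} (hb : 0 ≤ b) :
    invAbsRpow δ (min |a| b) ≤ invAbsRpow δ a + invAbsRpow δ b := by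
  rcases min_choice |a| b with h | h <;> rw [h, invAbsRpow]
  · rw [abs_abs]; exact le_self_add
  · rw [abs_of_nonneg hb]; exact le_add_self

lemma invAbsRpow_of_nonneg {δ x : ℝ} (hx : 0 ≤ x) :
    invAbsRpow δ x = (ENNReal.ofReal (x ^ δ))⁻¹ := by
  rw [invAbsRpow, abs_of_nonneg hx]

local notation "μ₁" => Measure.restrict (volume : Measure ℝ) (Icc (0:ℝ) 1)

local notation "ν₄" => Measure.prod μ₁ (Measure.prod μ₁ (Measure.prod μ₁ μ₁))

instance isProbabilityMeasure_volume_restrict_Icc_zero_one : IsProbabilityMeasure μ₁ :=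
  ⟨by simp⟩

lemma lintegral_invAbsRpow_Icc_lt_top {δ : ℝ} (hδ : δ < 1) :
    ∫⁻ u in Icc (-1) 1, invAbsRpow δ u < ⊤ := by
  have hloc : LocallyIntegrable (fun u : ℝ => |u| ^ (-δ)) volume :=
    locallyIntegrable_of_norm_le_rpow (by simp) (C := 1) (by simpa using hδ)
      (ae_of_all _ fun u => by simp [abs_of_nonneg (Real.rpow_nonneg (abs_nonneg u) _)])
      (continuous_abs.measurable.pow_const _).aestronglyMeasurable
  have hint := (hloc.integrableOn_isCompact isCompact_Icc (k := Icc (-1) 1)).lintegral_lt_top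
  refine lt_of_eq_of_lt (setLIntegral_congr_fun_ae measurableSet_Icc ?_) hint
  filter_upwards [Measure.ae_ne volume 0] with u hu _
  rw [invAbsRpow, Real.rpow_neg (abs_nonneg u),
    ENNReal.ofReal_inv_of_pos (Real.rpow_pos_of_pos (abs_pos.2 hu) δ)]

lemma lintegral_invAbsRpow_sub_le {δ a : ℝ} (ha : a ∈ Icc (0:ℝ) 1) :
    ∫⁻ b, invAbsRpow δ (a - b) ∂μ₁ ≤ ∫⁻ u in Icc (-1) 1, invAbsRpow δ u := by
  calc ∫⁻ b, invAbsRpow δ (a - b) ∂μ₁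
      = ∫⁻ b in Icc 0 1, (Icc (-1) 1).indicator (invAbsRpow δ) (a - b) := by
        refine setLIntegral_congr_fun measurableSet_Icc fun b hb => ?_
        rw [indicator_of_mem]
        constructor <;> linarith [ha.1, ha.2, hb.1, hb.2]
    _ ≤ ∫⁻ b, (Icc (-1) 1).indicator (invAbsRpow δ) (a - b) := setLIntegral_le_lintegral _ _
    _ = _ := by
        rw [lintegral_sub_left_eq_self, lintegral_indicator measurableSet_Icc]

lemma lintegral_invAbsRpow_sub_prod_lt_top {δ : ℝ} (hδ : δ < 1) :
    ∫⁻ z, invAbsRpow δ (z.1 - z.2) ∂Measure.prod μ₁ μ₁ < ⊤ := by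
  rw [lintegral_prod _ (by fun_prop)]
  calc _ ≤ ∫⁻ _ : ℝ, (∫⁻ u in Icc (-1) 1, invAbsRpow δ u) ∂μ₁ := by
        refine lintegral_mono_ae ?_
        filter_upwards [ae_restrict_mem measurableSet_Icc] with a ha using
          lintegral_invAbsRpow_sub_le ha
    _ < ⊤ := by
        rw [lintegral_const, measure_univ, mul_one]
        exact lintegral_invAbsRpow_Icc_lt_top hδ

lemma lintegral_invAbsRpow_lt_top {δ : ℝ} (hδ : δ < 1) : ∫⁻ a, invAbsRpow δ a ∂μ₁ < ⊤ := by
  have h := lintegral_invAbsRpow_sub_le (δ := δ) (a := 0) ⟨le_rfl, zero_le_one⟩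
  simp only [zero_sub, invAbsRpow, abs_neg] at h
  exact h.trans_lt (lintegral_invAbsRpow_Icc_lt_top hδ)

-- At `x = (s_j, t_j, s'_j, t'_j)`: the `j`-th summand of the integrand for `j ∈ S`, resp. `j ∉ S`.
noncomputable def sepDist (H : ℝ) (x : ℝ × ℝ × ℝ × ℝ) : ℝ :=
  min (|x.2.1 - x.2.2.2| ^ H) (x.2.1 ^ H) + min (|x.1 - x.2.2.1| ^ H) (x.1 ^ H)

noncomputable def nonsepDist (H : ℝ) (x : ℝ × ℝ × ℝ × ℝ) : ℝ :=
  min (|x.1 - x.2.1| ^ H) (min (|x.1 - x.2.2.1| ^ H) (min (|x.1 - x.2.2.2| ^ H) (x.1 ^ H)))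

noncomputable def pairMajorant (δ : ℝ) (z : ℝ × ℝ) : ℝ≥0∞ :=
  invAbsRpow δ (z.1 - z.2) + invAbsRpow δ z.1

noncomputable def sepMajorant (δ : ℝ) (x : ℝ × ℝ × ℝ × ℝ) : ℝ≥0∞ :=
  pairMajorant δ (x.1, x.2.2.1) * pairMajorant δ (x.2.1, x.2.2.2)

noncomputable def nonsepMajorant (δ : ℝ) (x : ℝ × ℝ × ℝ × ℝ) : ℝ≥0∞ :=
  invAbsRpow δ (x.1 - x.2.1) + invAbsRpow δ (x.1 - x.2.2.1) + invAbsRpow δ (x.1 - x.2.2.2) +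
    invAbsRpow δ x.1

noncomputable def coordMajorant {ι : Type*} [DecidableEq ι] (S : Finset ι) (δ : ℝ) (j : ι) :
    ℝ × ℝ × ℝ × ℝ → ℝ≥0∞ :=
  if j ∈ S then sepMajorant δ else nonsepMajorant δ

lemma sepDist_nonneg {H : ℝ} {x : ℝ × ℝ × ℝ × ℝ} (hs : 0 ≤ x.1) (ht : 0 ≤ x.2.1) :
    0 ≤ sepDist H x := by
  unfold sepDist; positivity

lemma nonsepDist_nonneg {H : ℝ} {x : ℝ × ℝ × ℝ × ℝ} (hs : 0 ≤ x.1) : 0 ≤ nonsepDist H x := by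
  unfold nonsepDist; positivity

lemma inv_ofReal_sepDist_rpow_le {H δ : ℝ} (hH : 0 < H) (hδ : 0 ≤ δ) {x : ℝ × ℝ × ℝ × ℝ}
    (hs : 0 ≤ x.1) (ht : 0 ≤ x.2.1) :
    (ENNReal.ofReal (sepDist H x ^ (2 / H * δ)))⁻¹ ≤ sepMajorant δ x := by
  obtain ⟨s, t, s', t'⟩ := x
  set u := min |t - t'| t
  set v := min |s - s'| s
  have hu : 0 ≤ u := le_min (abs_nonneg _) ht
  have hv : 0 ≤ v := le_min (abs_nonneg _) hs
  have hdist : sepDist H (s, t, s', t') = u ^ H + v ^ H := by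
    rw [sepDist, min_rpow_of_nonneg (abs_nonneg _) ht hH.le,
      min_rpow_of_nonneg (abs_nonneg _) hs hH.le]
  calc (ENNReal.ofReal (sepDist H (s, t, s', t') ^ (2 / H * δ)))⁻¹
      ≤ (ENNReal.ofReal (u ^ δ * v ^ δ))⁻¹ := by
        rw [hdist]
        exact ENNReal.inv_le_inv' (ENNReal.ofReal_le_ofReal
          (rpow_mul_rpow_le_add_rpow hu hv hH hδ))
    _ = invAbsRpow δ v * invAbsRpow δ u := by
        rw [ENNReal.ofReal_mul (Real.rpow_nonneg hu _), ENNReal.mul_inv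
          (Or.inr ENNReal.ofReal_ne_top) (Or.inl ENNReal.ofReal_ne_top),
          invAbsRpow_of_nonneg hu, invAbsRpow_of_nonneg hv, mul_comm]
    _ ≤ sepMajorant δ (s, t, s', t') :=
        mul_le_mul' (invAbsRpow_min_le δ _ hs) (invAbsRpow_min_le δ _ ht)

lemma inv_ofReal_nonsepDist_rpow_le {H : ℝ} (hH : 0 < H) (δ : ℝ) {x : ℝ × ℝ × ℝ × ℝ}
    (hs : 0 ≤ x.1) :
    (ENNReal.ofReal (nonsepDist H x ^ (1 / H * δ)))⁻¹ ≤ nonsepMajorant δ x := by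
  obtain ⟨s, t, s', t'⟩ := x
  have hm₃ : 0 ≤ min |s - t'| s := le_min (abs_nonneg _) hs
  have hm₂ : 0 ≤ min |s - s'| (min |s - t'| s) := le_min (abs_nonneg _) hm₃
  have hm : 0 ≤ min |s - t| (min |s - s'| (min |s - t'| s)) := le_min (abs_nonneg _) hm₂
  have hdist : nonsepDist H (s, t, s', t') =
      min |s - t| (min |s - s'| (min |s - t'| s)) ^ H := by
    rw [nonsepDist, min_rpow_of_nonneg (abs_nonneg _) hs hH.le,
      min_rpow_of_nonneg (abs_nonneg _) hm₃ hH.le, min_rpow_of_nonneg (abs_nonneg _) hm₂ hH.le]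
  rw [hdist, ← Real.rpow_mul hm, ← mul_assoc, mul_one_div_cancel hH.ne', one_mul,
    ← invAbsRpow_of_nonneg hm]
  calc _ ≤ invAbsRpow δ (s - t) + invAbsRpow δ (min |s - s'| (min |s - t'| s)) :=
        invAbsRpow_min_le δ _ hm₂
    _ ≤ invAbsRpow δ (s - t) + (invAbsRpow δ (s - s') + invAbsRpow δ (min |s - t'| s)) := by
        gcongr; exact invAbsRpow_min_le δ _ hm₃
    _ ≤ invAbsRpow δ (s - t) + (invAbsRpow δ (s - s') +
          (invAbsRpow δ (s - t') + invAbsRpow δ s)) := by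
        gcongr; exact invAbsRpow_min_le δ _ hs
    _ = nonsepMajorant δ (s, t, s', t') := by
        simp only [nonsepMajorant, add_assoc]

lemma lintegral_pairMajorant_lt_top {δ : ℝ} (hδ : δ < 1) :
    ∫⁻ z, pairMajorant δ z ∂Measure.prod μ₁ μ₁ < ⊤ := by
  simp only [pairMajorant]
  rw [lintegral_add_left (by fun_prop),
    measurePreserving_fst.lintegral_comp (measurable_invAbsRpow δ)]
  exact ENNReal.add_lt_top.2
    ⟨lintegral_invAbsRpow_sub_prod_lt_top hδ, lintegral_invAbsRpow_lt_top hδ⟩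

lemma lintegral_sepMajorant_lt_top {δ : ℝ} (hδ : δ < 1) :
    ∫⁻ x, sepMajorant δ x ∂ν₄ < ⊤ := by
  have hm : Measurable fun z => pairMajorant δ z := by unfold pairMajorant; fun_prop
  simp only [sepMajorant]
  rw [lintegral_mul_comp_pairs _ _ _ _ hm hm]
  exact ENNReal.mul_lt_top (lintegral_pairMajorant_lt_top hδ) (lintegral_pairMajorant_lt_top hδ)

lemma lintegral_nonsepMajorant_lt_top {δ : ℝ} (hδ : δ < 1) :
    ∫⁻ x, nonsepMajorant δ x ∂ν₄ < ⊤ := by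
  have hpair {π : ℝ × ℝ × ℝ → ℝ}
      (hπ : MeasurePreserving π (Measure.prod μ₁ (Measure.prod μ₁ μ₁)) μ₁) :
      ∫⁻ x, invAbsRpow δ (x.1 - π x.2) ∂ν₄ < ⊤ :=
    (((MeasurePreserving.id μ₁).prod hπ).lintegral_comp
      (f := fun z => invAbsRpow δ (z.1 - z.2)) (by fun_prop)).trans_lt
        (lintegral_invAbsRpow_sub_prod_lt_top hδ)
  simp only [nonsepMajorant]
  rw [lintegral_add_left (by fun_prop), lintegral_add_left (by fun_prop),
    lintegral_add_left (by fun_prop)]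
  refine ENNReal.add_lt_top.2 ⟨ENNReal.add_lt_top.2 ⟨ENNReal.add_lt_top.2 ⟨?_, ?_⟩, ?_⟩, ?_⟩
  · exact hpair (π := fun y => y.1) measurePreserving_fst
  · exact hpair (π := fun y => y.2.1) (measurePreserving_fst.comp measurePreserving_snd)
  · exact hpair (π := fun y => y.2.2) (measurePreserving_snd.comp measurePreserving_snd)
  · exact (measurePreserving_fst.lintegral_comp (measurable_invAbsRpow δ)).trans_lt
      (lintegral_invAbsRpow_lt_top hδ)

lemma inv_ofReal_rpow_le_prod_majorant {ι : Type*} [Fintype ι] [DecidableEq ι] {H : ι → ℝ}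
    (hH : ∀ j, 0 < H j) (S : Finset ι) {δ : ℝ} (hδ : 0 ≤ δ) {x : ι → ℝ × ℝ × ℝ × ℝ}
    (hs : ∀ j, 0 ≤ (x j).1) (ht : ∀ j, 0 ≤ (x j).2.1) :
    (ENNReal.ofReal ((∑ j ∈ S, sepDist (H j) (x j) + ∑ j ∈ Sᶜ, nonsepDist (H j) (x j)) ^
        (δ * (2 * ∑ j ∈ S, 1 / H j + ∑ j ∈ Sᶜ, 1 / H j))))⁻¹ ≤
      ∏ j, coordMajorant S δ j (x j) := by
  set d := S.piecewise (fun j => sepDist (H j) (x j)) (fun j => nonsepDist (H j) (x j))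
  set e := S.piecewise (fun j => 2 / H j * δ) (fun j => 1 / H j * δ)
  have hd : ∑ j ∈ S, sepDist (H j) (x j) + ∑ j ∈ Sᶜ, nonsepDist (H j) (x j) = ∑ j, d j := by
    rw [Finset.sum_piecewise, Finset.univ_inter, ← Finset.compl_eq_univ_sdiff]
  have he : δ * (2 * ∑ j ∈ S, 1 / H j + ∑ j ∈ Sᶜ, 1 / H j) = ∑ j, e j := by
    rw [Finset.sum_piecewise, Finset.univ_inter, ← Finset.compl_eq_univ_sdiff, mul_add,
      Finset.mul_sum, Finset.mul_sum, Finset.mul_sum]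
    congr 1 <;> refine Finset.sum_congr rfl fun j _ => by ring
  rw [hd, he]
  refine (inv_ofReal_sum_rpow_le_prod _ (fun j _ => ?_) (fun j _ => ?_)).trans
    (Finset.prod_le_prod' fun j _ => ?_) <;> by_cases hj : j ∈ S <;>
      simp only [d, e, coordMajorant, hj, Finset.piecewise_eq_of_mem,
        Finset.piecewise_eq_of_notMem, not_false_eq_true, if_true, if_false]
  · exact sepDist_nonneg (hs j) (ht j)
  · exact nonsepDist_nonneg (hs j)
  · exact mul_nonneg (div_nonneg zero_le_two (hH j).le) hδ
  · exact mul_nonneg (div_nonneg zero_le_one (hH j).le) hδ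
  · exact inv_ofReal_sepDist_rpow_le (hH j) hδ (hs j) (ht j)
  · exact inv_ofReal_nonsepDist_rpow_le (hH j) δ (hs j)

lemma volume_restrict_cube_prod {ι : Type*} [Fintype ι] :
    (volume : Measure ((ι → ℝ) × (ι → ℝ) × (ι → ℝ) × (ι → ℝ))).restrict
        ((univ.pi fun _ => Icc (0:ℝ) 1) ×ˢ ((univ.pi fun _ => Icc (0:ℝ) 1) ×ˢ
          ((univ.pi fun _ => Icc (0:ℝ) 1) ×ˢ (univ.pi fun _ => Icc (0:ℝ) 1)))) =
      (Measure.pi fun _ => μ₁).prod ((Measure.pi fun _ => μ₁).prod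
        ((Measure.pi fun _ => μ₁).prod (Measure.pi fun _ => μ₁))) := by
  have hcube : (volume : Measure (ι → ℝ)).restrict (univ.pi fun _ => Icc (0:ℝ) 1) =
      Measure.pi fun _ => μ₁ := by
    rw [volume_pi, Measure.restrict_pi_pi]
  simp only [Measure.volume_eq_prod, ← Measure.prod_restrict, hcube]

lemma measurable_coordMajorant {ι : Type*} [DecidableEq ι] (S : Finset ι) (δ : ℝ) (j : ι) :
    Measurable (coordMajorant S δ j) := by
  by_cases hj : j ∈ S
  · rw [coordMajorant, if_pos hj]; unfold sepMajorant pairMajorant; fun_prop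
  · rw [coordMajorant, if_neg hj]; unfold nonsepMajorant; fun_prop

lemma lintegral_coordMajorant_lt_top {ι : Type*} [DecidableEq ι] (S : Finset ι) {δ : ℝ}
    (hδ : δ < 1) (j : ι) : ∫⁻ x, coordMajorant S δ j x ∂ν₄ < ⊤ := by
  by_cases hj : j ∈ S
  · rw [coordMajorant, if_pos hj]; exact lintegral_sepMajorant_lt_top hδ
  · rw [coordMajorant, if_neg hj]; exact lintegral_nonsepMajorant_lt_top hδ

theorem stmt16_general (N : ℕ) (H : Fin N → ℝ)
    (hH : ∀ j, H j ∈ Set.Ioo (0:ℝ) 1)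
    (S : Finset (Fin N)) (γ : ℝ) (hγ : 0 < γ)
    (hcond : γ < 2 * (∑ j ∈ S, 1 / H j) + ∑ j ∈ Sᶜ, 1 / H j) :
    (∫⁻ p in ((Set.univ.pi fun _ : Fin N => Set.Icc (0:ℝ) 1) ×ˢ
        ((Set.univ.pi fun _ : Fin N => Set.Icc (0:ℝ) 1) ×ˢ
          ((Set.univ.pi fun _ : Fin N => Set.Icc (0:ℝ) 1) ×ˢ
            (Set.univ.pi fun _ : Fin N => Set.Icc (0:ℝ) 1))) :
        Set ((Fin N → ℝ) × ((Fin N → ℝ) × ((Fin N → ℝ) × (Fin N → ℝ))))),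
        (ENNReal.ofReal
          (((∑ j ∈ S,
              (min (|p.2.1 j - p.2.2.2 j| ^ H j) (p.2.1 j ^ H j) +
                min (|p.1 j - p.2.2.1 j| ^ H j) (p.1 j ^ H j))) +
            ∑ j ∈ Sᶜ,
              min (|p.1 j - p.2.1 j| ^ H j)
                (min (|p.1 j - p.2.2.1 j| ^ H j)
                  (min (|p.1 j - p.2.2.2 j| ^ H j) (p.1 j ^ H j)))) ^ γ))⁻¹) ≠
      ⊤ := by
  set T := 2 * (∑ j ∈ S, 1 / H j) + ∑ j ∈ Sᶜ, 1 / H j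
  have hT : 0 < T := hγ.trans hcond
  set δ := γ / T
  have hB : MeasurableSet (univ.pi fun _ : Fin N => Icc (0:ℝ) 1) :=
    MeasurableSet.univ_pi fun _ => measurableSet_Icc
  refine ne_top_of_le_ne_top ?_ (setLIntegral_mono' (hB.prod (hB.prod (hB.prod hB)))
    (g := fun p => ∏ j, coordMajorant S δ j (p.1 j, p.2.1 j, p.2.2.1 j, p.2.2.2 j)) fun p hp => ?_)
  · rw [volume_restrict_cube_prod, lintegral_prod_coords_eq_prod _ (measurable_coordMajorant S δ)]
    exact (ENNReal.prod_lt_top fun j _ =>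
      lintegral_coordMajorant_lt_top S ((div_lt_one hT).2 hcond) j).ne
  · rw [show γ = δ * T from (div_mul_cancel₀ γ hT.ne').symm]
    exact inv_ofReal_rpow_le_prod_majorant (fun j => (hH j).1) S (div_nonneg hγ.le hT.le)
      (x := fun j => (p.1 j, p.2.1 j, p.2.2.1 j, p.2.2.2 j))
      (fun j => (hp.1 j (mem_univ j)).1) (fun j => (hp.2.1 j (mem_univ j)).1)

theorem stmt16 (N : ℕ) (hN : 1 ≤ N) (H : Fin N → ℝ)
    (hH : ∀ j, H j ∈ Set.Ioo (0:ℝ) 1)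
    (S : Finset (Fin N)) (γ : ℝ) (hγ : 0 < γ)
    (hcond : γ < 2 * (∑ j ∈ S, 1 / H j) + ∑ j ∈ Sᶜ, 1 / H j) :
    (∫⁻ p in ((Set.univ.pi fun _ : Fin N => Set.Icc (0:ℝ) 1) ×ˢ
        ((Set.univ.pi fun _ : Fin N => Set.Icc (0:ℝ) 1) ×ˢ
          ((Set.univ.pi fun _ : Fin N => Set.Icc (0:ℝ) 1) ×ˢ
            (Set.univ.pi fun _ : Fin N => Set.Icc (0:ℝ) 1))) :
        Set ((Fin N → ℝ) × ((Fin N → ℝ) × ((Fin N → ℝ) × (Fin N → ℝ))))),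
        (ENNReal.ofReal
          (((∑ j ∈ S,
              (min (|p.2.1 j - p.2.2.2 j| ^ H j) (p.2.1 j ^ H j) +
                min (|p.1 j - p.2.2.1 j| ^ H j) (p.1 j ^ H j))) +
            ∑ j ∈ Sᶜ,
              min (|p.1 j - p.2.1 j| ^ H j)
                (min (|p.1 j - p.2.2.1 j| ^ H j)
                  (min (|p.1 j - p.2.2.2 j| ^ H j) (p.1 j ^ H j)))) ^ γ))⁻¹) ≠
      ⊤ :=
  stmt16_general N H hH S γ hγ hcond
end
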